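/- arXiv:2410.23533 — 7 statements merged into one kernel-verified Lean document; each statement's English description precedes it below -/
import Mathlib

section
/- For every r ≥ 0, Φ(r)² + Σ_{n=1}^{N−1} Wₙ(r)² = 1. -/
/-- The empirical Littlewood–Paley radial windows `Φ, W₁, …, W_{N−1}` form a
pointwise partition of unity in the squares: for every `r ≥ 0`,
`Φ(r)² + Σ_{n=1}^{N−1} Wₙ(r)² = 1`. -/
theorem empirical_LP_partition_of_unity
    (β : ℝ → ℝ)
    (hβ0 : ∀ x : ℝ, x ≤ 0 → β x = 0)
    (hβ1 : ∀ x ∈ Set.Icc (0 : ℝ) 1, β x = x ^ 4 * (35 - 84 * x + 70 * x ^ 2 - 20 * x ^ 3))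
    (hβ2 : ∀ x : ℝ, 1 ≤ x → β x = 1)
    (N : ℕ) (hN : 2 ≤ N) (ω : ℕ → ℝ)
    (hω0 : 0 < ω 1)
    (hωmono : ∀ n, 1 ≤ n → n ≤ N - 2 → ω n < ω (n + 1))
    (γ : ℝ) (hγ : γ ∈ Set.Ioo (0 : ℝ) 1)
    (hsep : ∀ n, 1 ≤ n → n ≤ N - 2 → (1 + γ) * ω n ≤ (1 - γ) * ω (n + 1))
    (Φ : ℝ → ℝ) (W : ℕ → ℝ → ℝ)
    (hΦ1 : ∀ r : ℝ, 0 ≤ r → r ≤ (1 - γ) * ω 1 → Φ r = 1)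
    (hΦ2 : ∀ r : ℝ, (1 - γ) * ω 1 ≤ r → r ≤ (1 + γ) * ω 1 →
      Φ r = Real.cos (Real.pi / 2 * β ((r - (1 - γ) * ω 1) / (2 * γ * ω 1))))
    (hΦ3 : ∀ r : ℝ, (1 + γ) * ω 1 < r → Φ r = 0)
    (hW1 : ∀ n, 1 ≤ n → n ≤ N - 2 → ∀ r : ℝ, (1 - γ) * ω n ≤ r → r ≤ (1 + γ) * ω n →
      W n r = Real.sin (Real.pi / 2 * β ((r - (1 - γ) * ω n) / (2 * γ * ω n))))
    (hW2 : ∀ n, 1 ≤ n → n ≤ N - 2 → ∀ r : ℝ, (1 + γ) * ω n ≤ r → r ≤ (1 - γ) * ω (n + 1) →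
      W n r = 1)
    (hW3 : ∀ n, 1 ≤ n → n ≤ N - 2 → ∀ r : ℝ,
      (1 - γ) * ω (n + 1) ≤ r → r ≤ (1 + γ) * ω (n + 1) →
      W n r = Real.cos (Real.pi / 2 * β ((r - (1 - γ) * ω (n + 1)) / (2 * γ * ω (n + 1)))))
    (hW4 : ∀ n, 1 ≤ n → n ≤ N - 2 → ∀ r : ℝ, 0 ≤ r →
      (r < (1 - γ) * ω n ∨ (1 + γ) * ω (n + 1) < r) → W n r = 0)
    (hWl1 : ∀ r : ℝ, (1 - γ) * ω (N - 1) ≤ r → r ≤ (1 + γ) * ω (N - 1) →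
      W (N - 1) r = Real.sin (Real.pi / 2 * β ((r - (1 - γ) * ω (N - 1)) / (2 * γ * ω (N - 1)))))
    (hWl2 : ∀ r : ℝ, (1 + γ) * ω (N - 1) ≤ r → W (N - 1) r = 1)
    (hWl3 : ∀ r : ℝ, 0 ≤ r → r < (1 - γ) * ω (N - 1) → W (N - 1) r = 0)
    :
    ∀ r : ℝ, 0 ≤ r → Φ r ^ 2 + ∑ n ∈ Finset.Icc 1 (N - 1), (W n r) ^ 2 = 1 := by
  classical
  obtain ⟨hγ0, hγ1⟩ := hγ
  have hβz : β 0 = 0 := hβ0 0 le_rfl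
  have hβo : β 1 = 1 := hβ2 1 le_rfl
  -- monotonicity of ω on [1, N-1]
  have hmono : ∀ a b, 1 ≤ a → a ≤ b → b ≤ N - 1 → ω a ≤ ω b := by
    intro a b ha hab hb
    induction b with
    | zero => omega
    | succ b ih =>
      rcases eq_or_lt_of_le hab with h | h
      · rw [h]
      · have h1 : a ≤ b := by omega
        have h2 : b ≤ N - 1 := by omega
        exact (ih h1 h2).trans (hωmono b (by omega) (by omega)).le
  have hpos : ∀ n, 1 ≤ n → n ≤ N - 1 → 0 < ω n := fun n h1 h2 =>
    lt_of_lt_of_le hω0 (hmono 1 n le_rfl h1 h2)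
  have hchain : ∀ a b, 1 ≤ a → a + 1 ≤ b → b ≤ N - 1 → (1 + γ) * ω a ≤ (1 - γ) * ω b := by
    intro a b ha hab hb
    calc (1 + γ) * ω a ≤ (1 - γ) * ω (a + 1) := hsep a ha (by omega)
      _ ≤ (1 - γ) * ω b :=
        mul_le_mul_of_nonneg_left (hmono (a + 1) b (by omega) hab hb) (by linarith)
  have hlr : ∀ n, 1 ≤ n → n ≤ N - 1 → (1 - γ) * ω n ≤ (1 + γ) * ω n := by
    intro n h1 h2
    have := hpos n h1 h2
    nlinarith
  -- arguments at the endpoints of a ramp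
  have harg0 : ∀ n, 1 ≤ n → n ≤ N - 1 →
      ((1 - γ) * ω n - (1 - γ) * ω n) / (2 * γ * ω n) = 0 := by
    intro n _ _; simp
  have harg1 : ∀ n, 1 ≤ n → n ≤ N - 1 →
      ((1 + γ) * ω n - (1 - γ) * ω n) / (2 * γ * ω n) = 1 := by
    intro n h1 h2
    have hω := hpos n h1 h2
    field_simp
    ring
  -- sin at the lower end of a ramp, for any window
  have hsinW : ∀ n, 1 ≤ n → n ≤ N - 1 → ∀ r : ℝ, (1 - γ) * ω n ≤ r → r ≤ (1 + γ) * ω n →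
      W n r = Real.sin (Real.pi / 2 * β ((r - (1 - γ) * ω n) / (2 * γ * ω n))) := by
    intro n h1 h2 r ha hb
    rcases lt_or_eq_of_le h2 with h | h
    · exact hW1 n h1 (by omega) r ha hb
    · subst h; exact hWl1 r ha hb
  have hcosW : ∀ n, 2 ≤ n → n ≤ N - 1 → ∀ r : ℝ, (1 - γ) * ω n ≤ r → r ≤ (1 + γ) * ω n →
      W (n - 1) r = Real.cos (Real.pi / 2 * β ((r - (1 - γ) * ω n) / (2 * γ * ω n))) := by
    intro n h1 h2 r ha hb
    have key := hW3 (n - 1) (by omega) (by omega) r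
    have hn : n - 1 + 1 = n := by omega
    rw [hn] at key
    exact key ha hb
  -- Φ vanishes above its support (closed version)
  have hΦz : ∀ r : ℝ, (1 + γ) * ω 1 ≤ r → Φ r = 0 := by
    intro r hr
    rcases eq_or_lt_of_le hr with h | h
    · subst h
      rw [hΦ2 _ (hlr 1 le_rfl (by omega)) le_rfl, harg1 1 le_rfl (by omega), hβo,
        mul_one, Real.cos_pi_div_two]
    · exact hΦ3 r h
  -- W m vanishes off its support (closed version)
  have hWzL : ∀ m, 1 ≤ m → m ≤ N - 1 → ∀ r : ℝ, 0 ≤ r → r ≤ (1 - γ) * ω m → W m r = 0 := by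
    intro m h1 h2 r hr0 hr
    rcases lt_or_eq_of_le hr with h | h
    · rcases lt_or_eq_of_le h2 with h2' | h2'
      · exact hW4 m h1 (by omega) r hr0 (Or.inl h)
      · rw [h2']; rw [h2'] at h; exact hWl3 r hr0 h
    · subst h
      rw [hsinW m h1 h2 _ le_rfl (hlr m h1 h2), harg0 m h1 h2, hβz, mul_zero, Real.sin_zero]
  have hWzR : ∀ m, 1 ≤ m → m + 1 ≤ N - 1 → ∀ r : ℝ, (1 + γ) * ω (m + 1) ≤ r → W m r = 0 := by
    intro m h1 h2 r hr
    have hr0 : (0:ℝ) ≤ r := by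
      have := hpos (m + 1) (by omega) h2
      nlinarith
    rcases eq_or_lt_of_le hr with h | h
    · subst h
      rw [hW3 m h1 (by omega) _ (hlr (m + 1) (by omega) h2) le_rfl,
        harg1 (m + 1) (by omega) h2, hβo, mul_one, Real.cos_pi_div_two]
    · exact hW4 m h1 (by omega) r hr0 (Or.inr h)
  -- now the main case analysis
  intro r hr0
  rcases le_or_gt r ((1 - γ) * ω 1) with hZ | hZ
  · -- zone 0 : Φ = 1, all windows vanish
    rw [hΦ1 r hr0 hZ, Finset.sum_eq_zero, add_zero, one_pow]
    intro m hm
    simp only [Finset.mem_Icc] at hm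
    have : r ≤ (1 - γ) * ω m :=
      hZ.trans (mul_le_mul_of_nonneg_left (hmono 1 m le_rfl hm.1 hm.2) (by linarith))
    rw [hWzL m hm.1 hm.2 r hr0 this]; ring
  · set P : ℕ → Prop := fun k => (1 - γ) * ω k ≤ r with hP
    set n := Nat.findGreatest P (N - 1) with hn
    have hn1 : 1 ≤ n := Nat.le_findGreatest (by omega) hZ.le
    have hnN : n ≤ N - 1 := Nat.findGreatest_le (N - 1)
    have hPn : (1 - γ) * ω n ≤ r := Nat.findGreatest_spec (P := P) (by omega) hZ.le
    have hgr : ∀ m, n < m → m ≤ N - 1 → r < (1 - γ) * ω m := by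
      intro m h1 h2
      have := Nat.findGreatest_is_greatest (P := P) (n := N - 1) h1 h2
      exact lt_of_not_ge this
    rcases le_or_gt r ((1 + γ) * ω n) with hR | hR
    · -- ramp zone at n
      have hsin := hsinW n hn1 hnN r hPn hR
      rcases eq_or_lt_of_le hn1 with h1 | h1
      · -- n = 1 : Φ is the cosine partner
        rw [← h1] at hsin hPn hR
        rw [hΦ2 r hPn hR,
          Finset.sum_eq_single_of_mem 1 (by simp only [Finset.mem_Icc]; omega)
            (fun m hm hne => by
              simp only [Finset.mem_Icc] at hm
              have h2m : 2 ≤ m := by omega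
              have : r ≤ (1 - γ) * ω m := hR.trans (hchain 1 m le_rfl (by omega) hm.2)
              rw [hWzL m hm.1 hm.2 r hr0 this]; ring),
          hsin]
        exact Real.cos_sq_add_sin_sq _
      · -- n ≥ 2 : W (n-1) is the cosine partner
        have hcos := hcosW n h1 hnN r hPn hR
        have hΦ0 : Φ r = 0 := hΦz r ((hchain 1 n le_rfl h1 hnN).trans hPn)
        rw [hΦ0,
          Finset.sum_eq_add_of_mem (n - 1) n (by simp only [Finset.mem_Icc]; omega)
            (by simp only [Finset.mem_Icc]; omega) (by omega)
            (fun m hm ⟨hne1, hne2⟩ => by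
              simp only [Finset.mem_Icc] at hm
              rcases lt_or_gt_of_ne hne2 with h | h
              · have hm2 : m + 1 + 1 ≤ n := by omega
                have : (1 + γ) * ω (m + 1) ≤ r :=
                  ((hchain (m + 1) n (by omega) hm2 hnN).trans hPn)
                rw [hWzR m hm.1 (by omega) r this]; ring
              · have : r ≤ (1 - γ) * ω m := hR.trans (hchain n m hn1 h hm.2)
                rw [hWzL m hm.1 hm.2 r hr0 this]; ring),
          hcos, hsin]
        have hpy := Real.cos_sq_add_sin_sq
          (Real.pi / 2 * β ((r - (1 - γ) * ω n) / (2 * γ * ω n)))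
        linarith
    · -- right of the ramp at n
      have hΦ0 : Φ r = 0 := hΦz r (le_of_lt (lt_of_le_of_lt
        (mul_le_mul_of_nonneg_left (hmono 1 n le_rfl hn1 hnN) (by linarith)) hR))
      rcases eq_or_lt_of_le hnN with hlast | hlast
      · -- tail zone
        have htail : (1 + γ) * ω (N - 1) ≤ r := by rw [← hlast]; exact hR.le
        rw [hΦ0, Finset.sum_eq_single_of_mem (N - 1) (by simp only [Finset.mem_Icc]; omega)
            (fun m hm hne => by
              simp only [Finset.mem_Icc] at hm
              have : (1 + γ) * ω (m + 1) ≤ r := htail.trans'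
                (mul_le_mul_of_nonneg_left
                  (hmono (m + 1) (N - 1) (by omega) (by omega) le_rfl) (by linarith))
              rw [hWzR m hm.1 (by omega) r this]; ring),
          hWl2 r htail]
        ring
      · -- plateau zone : W n = 1
        have hup : r ≤ (1 - γ) * ω (n + 1) := (hgr (n + 1) (by omega) (by omega)).le
        rw [hΦ0, Finset.sum_eq_single_of_mem n (by simp only [Finset.mem_Icc]; omega)
            (fun m hm hne => by
              simp only [Finset.mem_Icc] at hm
              rcases lt_or_gt_of_ne hne with h | h
              · have : (1 + γ) * ω (m + 1) ≤ r := le_of_lt (lt_of_le_of_lt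
                  (mul_le_mul_of_nonneg_left (hmono (m + 1) n (by omega) (by omega) hnN)
                    (by linarith)) hR)
                rw [hWzR m hm.1 (by omega) r this]; ring
              · have : r ≤ (1 - γ) * ω m := hup.trans
                  (mul_le_mul_of_nonneg_left (hmono (n + 1) m (by omega) h (by omega))
                    (by linarith))
                rw [hWzL m hm.1 hm.2 r hr0 this]; ring),
          hW2 n hn1 (by omega) r hR.le hup]
        ring
end

section
/- For every ω ∈ ℝ with |ω| ≤ (1−γ)ω^N, φ̂₁(ω)² + Σ_{n=1}^{N−1} ψ̂ₙ(ω)² = 1. -/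
lemma sum_two_aux {s : Finset ℕ} {f : ℕ → ℝ} {a b : ℕ} (ha : a ∈ s) (hb : b ∈ s)
    (hab : a ≠ b) (h : ∀ c ∈ s, c ≠ a → c ≠ b → f c = 0) :
    ∑ c ∈ s, f c = f a + f b := by
  rw [← Finset.add_sum_erase s f ha, ← Finset.add_sum_erase _ f
    (Finset.mem_erase.mpr ⟨Ne.symm hab, hb⟩)]
  have : ∑ c ∈ (s.erase a).erase b, f c = 0 := by
    refine Finset.sum_eq_zero fun c hc => ?_
    have h1 := Finset.mem_erase.mp hc
    have h2 := Finset.mem_erase.mp h1.2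
    exact h c h2.2 h2.1 h1.1
  rw [this]; ring

/-- For the 1D empirical wavelet Fourier profiles `φ̂₁, ψ̂₁, …, ψ̂_{N−1}` built on
boundaries `0 < ω¹ < … < ω^N` with non-overlapping transition areas, one has
`φ̂₁(ω)² + Σ_{n=1}^{N−1} ψ̂ₙ(ω)² = 1` for every `ω` with `|ω| ≤ (1−γ)ω^N`. -/
theorem empirical_wavelet_partition_of_unity
    (β : ℝ → ℝ)
    (hβ0 : ∀ x : ℝ, x ≤ 0 → β x = 0)
    (hβ1 : ∀ x ∈ Set.Icc (0 : ℝ) 1, β x = x ^ 4 * (35 - 84 * x + 70 * x ^ 2 - 20 * x ^ 3))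
    (hβ2 : ∀ x : ℝ, 1 ≤ x → β x = 1)
    (N : ℕ) (hN : 2 ≤ N) (ω : ℕ → ℝ)
    (hω0 : 0 < ω 1)
    (hωmono : ∀ n, 1 ≤ n → n ≤ N - 1 → ω n < ω (n + 1))
    (γ : ℝ) (hγ : γ ∈ Set.Ioo (0 : ℝ) 1)
    (hsep : ∀ n, 1 ≤ n → n ≤ N - 1 → (1 + γ) * ω n ≤ (1 - γ) * ω (n + 1))
    (φ : ℝ → ℝ) (ψ : ℕ → ℝ → ℝ)
    (hφ1 : ∀ w : ℝ, |w| ≤ (1 - γ) * ω 1 → φ w = 1)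
    (hφ2 : ∀ w : ℝ, (1 - γ) * ω 1 ≤ |w| → |w| ≤ (1 + γ) * ω 1 →
      φ w = Real.cos (Real.pi / 2 * β ((|w| - (1 - γ) * ω 1) / (2 * γ * ω 1))))
    (hφ3 : ∀ w : ℝ, (1 + γ) * ω 1 < |w| → φ w = 0)
    (hψ1 : ∀ n, 1 ≤ n → n ≤ N - 1 → ∀ w : ℝ, (1 - γ) * ω n ≤ |w| → |w| ≤ (1 + γ) * ω n →
      ψ n w = Real.sin (Real.pi / 2 * β ((|w| - (1 - γ) * ω n) / (2 * γ * ω n))))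
    (hψ2 : ∀ n, 1 ≤ n → n ≤ N - 1 → ∀ w : ℝ,
      (1 + γ) * ω n ≤ |w| → |w| ≤ (1 - γ) * ω (n + 1) → ψ n w = 1)
    (hψ3 : ∀ n, 1 ≤ n → n ≤ N - 1 → ∀ w : ℝ,
      (1 - γ) * ω (n + 1) ≤ |w| → |w| ≤ (1 + γ) * ω (n + 1) →
      ψ n w = Real.cos (Real.pi / 2 * β ((|w| - (1 - γ) * ω (n + 1)) / (2 * γ * ω (n + 1)))))
    (hψ4 : ∀ n, 1 ≤ n → n ≤ N - 1 → ∀ w : ℝ,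
      (|w| < (1 - γ) * ω n ∨ (1 + γ) * ω (n + 1) < |w|) → ψ n w = 0) :
    ∀ w : ℝ, |w| ≤ (1 - γ) * ω N →
      φ w ^ 2 + ∑ n ∈ Finset.Icc 1 (N - 1), (ψ n w) ^ 2 = 1 := by
  classical
  obtain ⟨hγ0, hγ1⟩ := hγ
  have h1γ : (0:ℝ) < 1 - γ := by linarith
  have h1γ' : (0:ℝ) < 1 + γ := by linarith
  -- monotonicity of ω on [1, N]
  have key : ∀ b a, 1 ≤ a → a + b ≤ N → ω a ≤ ω (a + b) := by
    intro b
    induction b with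
    | zero => intro a _ _; simp
    | succ b ih =>
      intro a ha hab
      have h1 : a + b ≤ N - 1 := by omega
      have h2 : 1 ≤ a + b := by omega
      have := hωmono (a + b) h2 h1
      have := ih a ha (by omega)
      have h3 : ω a ≤ ω (a + b + 1) := by linarith
      exact h3
  have hmono : ∀ a b, 1 ≤ a → a ≤ b → b ≤ N → ω a ≤ ω b := by
    intro a b ha hab hb
    have := key (b - a) a ha (by omega)
    rwa [Nat.add_sub_cancel' hab] at this
  have hpos : ∀ a, 1 ≤ a → a ≤ N → 0 < ω a := fun a ha hb =>
    lt_of_lt_of_le hω0 (hmono 1 a le_rfl ha hb)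
  -- vanishing lemmas
  intro w hw
  have hβz : β 0 = 0 := hβ0 0 le_rfl
  have hβo : β 1 = 1 := hβ2 1 le_rfl
  have Z1 : ∀ m, 1 ≤ m → m ≤ N - 1 → |w| ≤ (1 - γ) * ω m → ψ m w = 0 := by
    intro m hm1 hm2 hle
    rcases lt_or_eq_of_le hle with h | h
    · exact hψ4 m hm1 hm2 w (Or.inl h)
    · have hmN : (0:ℝ) < ω m := hpos m hm1 (by omega)
      have := hψ1 m hm1 hm2 w (le_of_eq h.symm) (by nlinarith)
      rw [this, ← h, sub_self, zero_div, hβz, mul_zero, Real.sin_zero]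
  have Z2 : ∀ m, 1 ≤ m → m ≤ N - 1 → (1 + γ) * ω (m + 1) ≤ |w| → ψ m w = 0 := by
    intro m hm1 hm2 hle
    rcases lt_or_eq_of_le hle with h | h
    · exact hψ4 m hm1 hm2 w (Or.inr h)
    · have hmN : (0:ℝ) < ω (m + 1) := hpos (m + 1) (by omega) (by omega)
      have harg : (|w| - (1 - γ) * ω (m + 1)) / (2 * γ * ω (m + 1)) = 1 := by
        rw [← h]; field_simp; ring
      have := hψ3 m hm1 hm2 w (by nlinarith) (le_of_eq h.symm)
      rw [this, harg, hβo, mul_one, Real.cos_pi_div_two]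
  have Zφ : (1 + γ) * ω 1 ≤ |w| → φ w = 0 := by
    intro hle
    rcases lt_or_eq_of_le hle with h | h
    · exact hφ3 w h
    · have harg : (|w| - (1 - γ) * ω 1) / (2 * γ * ω 1) = 1 := by
        rw [← h]; field_simp; ring
      have := hφ2 w (by nlinarith) (le_of_eq h.symm)
      rw [this, harg, hβo, mul_one, Real.cos_pi_div_two]
  by_cases hA : |w| ≤ (1 - γ) * ω 1
  · -- case A
    rw [hφ1 w hA]
    have : ∑ n ∈ Finset.Icc 1 (N - 1), (ψ n w) ^ 2 = 0 := by
      refine Finset.sum_eq_zero fun m hm => ?_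
      obtain ⟨hm1, hm2⟩ := Finset.mem_Icc.mp hm
      have : ω 1 ≤ ω m := hmono 1 m le_rfl hm1 (by omega)
      rw [Z1 m hm1 hm2 (by nlinarith)]; ring
    rw [this]; norm_num
  · push_neg at hA
    -- find maximal n with (1-γ)ω n < |w|
    set S : Finset ℕ := (Finset.Icc 1 (N - 1)).filter (fun k => (1 - γ) * ω k < |w|) with hS
    have h1S : 1 ∈ S := Finset.mem_filter.mpr ⟨Finset.mem_Icc.mpr ⟨le_rfl, by omega⟩, hA⟩
    have hSne : S.Nonempty := ⟨1, h1S⟩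
    set n := S.max' hSne with hn
    clear_value n
    obtain ⟨hnmem, hnlt⟩ := Finset.mem_filter.mp (S.max'_mem hSne)
    rw [← hn] at hnmem hnlt
    obtain ⟨hn1, hn2⟩ := Finset.mem_Icc.mp hnmem
    have hub : |w| ≤ (1 - γ) * ω (n + 1) := by
      by_cases hnN : n = N - 1
      · rw [hnN]; rwa [show N - 1 + 1 = N by omega]
      · by_contra hc
        push_neg at hc
        have : n + 1 ∈ S := Finset.mem_filter.mpr
          ⟨Finset.mem_Icc.mpr ⟨by omega, by omega⟩, hc⟩
        have := S.le_max' _ this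
        omega
    have hωn : (0:ℝ) < ω n := hpos n hn1 (by omega)
    have hωn1 : (0:ℝ) < ω (n + 1) := hpos (n + 1) (by omega) (by omega)
    by_cases hB : (1 + γ) * ω n ≤ |w|
    · -- plateau case
      rw [Zφ (by
        have h5 : ω 1 ≤ ω n := hmono 1 n le_rfl hn1 (by omega)
        have h6 : (1 + γ) * ω 1 ≤ (1 + γ) * ω n := mul_le_mul_of_nonneg_left h5 h1γ'.le
        linarith)]
      have hsum : ∑ m ∈ Finset.Icc 1 (N - 1), (ψ m w) ^ 2 = (ψ n w) ^ 2 := by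
        refine Finset.sum_eq_single_of_mem n hnmem fun m hm hmn => ?_
        obtain ⟨hm1, hm2⟩ := Finset.mem_Icc.mp hm
        rcases lt_or_gt_of_ne hmn with h | h
        · have h5 : ω (m + 1) ≤ ω n := hmono (m + 1) n (by omega) (by omega) (by omega)
          have h6 : (1 + γ) * ω (m + 1) ≤ (1 + γ) * ω n :=
            mul_le_mul_of_nonneg_left h5 h1γ'.le
          rw [Z2 m hm1 hm2 (by linarith)]; ring
        · have h5 : ω (n + 1) ≤ ω m := hmono (n + 1) m (by omega) (by omega) (by omega)
          have h6 : (1 - γ) * ω (n + 1) ≤ (1 - γ) * ω m :=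
            mul_le_mul_of_nonneg_left h5 h1γ.le
          rw [Z1 m hm1 hm2 (by linarith)]; ring
      rw [hsum, hψ2 n hn1 hn2 w hB hub]; norm_num
    · -- transition case
      push_neg at hB
      have hψn := hψ1 n hn1 hn2 w (le_of_lt hnlt) (le_of_lt hB)
      by_cases hn1' : n = 1
      · -- n = 1 : φ is the cosine partner
        subst hn1'
        have hφw := hφ2 w (le_of_lt hnlt) (le_of_lt hB)
        have hsum : ∑ m ∈ Finset.Icc 1 (N - 1), (ψ m w) ^ 2 = (ψ 1 w) ^ 2 := by
          refine Finset.sum_eq_single_of_mem 1 hnmem fun m hm hmn => ?_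
          obtain ⟨hm1, hm2⟩ := Finset.mem_Icc.mp hm
          have hm2' : 2 ≤ m := by omega
          have hs1 := hsep 1 le_rfl (by omega)
          have h5 : ω 2 ≤ ω m := hmono 2 m (by norm_num) hm2' (by omega)
          have h6 : (1 - γ) * ω 2 ≤ (1 - γ) * ω m := mul_le_mul_of_nonneg_left h5 h1γ.le
          have h7 : (1 - γ) * ω (1 + 1) = (1 - γ) * ω 2 := by norm_num
          rw [Z1 m hm1 hm2 (by linarith)]; ring
        rw [hsum, hφw, hψn]
        exact Real.cos_sq_add_sin_sq _
      · -- n ≥ 2 : ψ (n-1) is the cosine partner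
        have hn2' : 2 ≤ n := by omega
        have hcos := hψ3 (n - 1) (by omega) (by omega) w
          (by rw [show n - 1 + 1 = n by omega]; exact le_of_lt hnlt)
          (by rw [show n - 1 + 1 = n by omega]; exact le_of_lt hB)
        rw [show n - 1 + 1 = n by omega] at hcos
        have hφw : φ w = 0 := by
          apply Zφ
          have hs1 := hsep 1 le_rfl (by omega)
          have h5 : ω 2 ≤ ω n := hmono 2 n (by norm_num) hn2' (by omega)
          have h6 : (1 - γ) * ω 2 ≤ (1 - γ) * ω n := mul_le_mul_of_nonneg_left h5 h1γ.le
          have h7 : (1 - γ) * ω (1 + 1) = (1 - γ) * ω 2 := by norm_num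
          linarith
        have hsum : ∑ m ∈ Finset.Icc 1 (N - 1), (ψ m w) ^ 2
            = (ψ (n - 1) w) ^ 2 + (ψ n w) ^ 2 := by
          refine sum_two_aux (Finset.mem_Icc.mpr ⟨by omega, by omega⟩) hnmem
            (by omega) fun m hm hm1' hm2' => ?_
          obtain ⟨hm1, hm2⟩ := Finset.mem_Icc.mp hm
          rcases lt_or_gt_of_ne (show m ≠ n from hm2') with h | h
          · have hmn : m + 1 ≤ n - 1 := by omega
            have hsn := hsep (n - 1) (by omega) (by omega)
            rw [show n - 1 + 1 = n by omega] at hsn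
            have h5 : ω (m + 1) ≤ ω (n - 1) := hmono (m + 1) (n - 1) (by omega) hmn (by omega)
            have h6 : (1 + γ) * ω (m + 1) ≤ (1 + γ) * ω (n - 1) :=
              mul_le_mul_of_nonneg_left h5 h1γ'.le
            rw [Z2 m hm1 hm2 (by linarith)]; ring
          · have hsn := hsep n hn1 hn2
            have : ω (n + 1) ≤ ω m := hmono (n + 1) m (by omega) (by omega) (by omega)
            rw [Z1 m hm1 hm2 (by nlinarith)]; ring
        rw [hφw, hsum, hcos, hψn]
        have := Real.cos_sq_add_sin_sq (Real.pi / 2 * β ((|w| - (1 - γ) * ω n) / (2 * γ * ω n)))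
        linarith [this]
end

section
/- For every f ∈ L²(ℝ²), ‖𝓕⁻¹( m₀ · 𝓕(f) )‖_{L²}² + Σ_{n=1}^{N−1} ‖𝓕⁻¹( mₙ · 𝓕(f) )‖_{L²}² = ‖f‖_{L²}², where m₀(ω) = Φ(|ω|) and mₙ(ω) = Wₙ(|ω|) for ω ∈ ℝ²; i.e., the 2D empirical Littlewood–Paley wavelet family is a tight frame of L²(ℝ²). -/
/-!
Let `θₙ r = (π/2) β((r − (1−γ)ωⁿ)/(2γωⁿ))`; it vanishes below the `n`-th transition area and
equals `π/2` above it. On `[0, ∞)` the windows are `Φ = cos θ₁`, `Wₙ = sin θₙ · cos θₙ₊₁` and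
`W_{N−1} = sin θ_{N−1}`. Since the transition areas do not overlap, at every point
`sin θₙ = 1` or `cos θₙ₊₁ = 1`, so `Φ² + ∑ Wₙ²` telescopes to `1`. As `F` is an isometry,
this pointwise partition of unity becomes the norm identity.
-/

open FourierTransform MeasureTheory Real

theorem MeasureTheory.L2.norm_sq_eq_integral_norm_sq {α E : Type*} [MeasurableSpace α]
    {μ : Measure α} [NormedAddCommGroup E] [InnerProductSpace ℝ E] (f : Lp E 2 μ) :
    ‖f‖ ^ 2 = ∫ x, ‖f x‖ ^ 2 ∂μ := by
  rw [← real_inner_self_eq_norm_sq, L2.inner_def]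
  simp

theorem MeasureTheory.L2.sum_norm_sq_eq_of_sum_sq_eq_one {α 𝕜 ι : Type*} [MeasurableSpace α]
    {μ : Measure α} [RCLike 𝕜] (s : Finset ι) {m : ι → α → ℝ}
    (hm : ∀ᵐ x ∂μ, ∑ i ∈ s, m i x ^ 2 = 1) (f : Lp 𝕜 2 μ) (g : ι → Lp 𝕜 2 μ)
    (hg : ∀ i ∈ s, g i =ᵐ[μ] fun x => (m i x : 𝕜) * f x) :
    ∑ i ∈ s, ‖g i‖ ^ 2 = ‖f‖ ^ 2 := by
  have hint : ∀ h : Lp 𝕜 2 μ, Integrable (fun x => ‖h x‖ ^ 2) μ := fun h =>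
    (memLp_two_iff_integrable_sq_norm (Lp.aestronglyMeasurable h)).1 (Lp.memLp h)
  simp only [norm_sq_eq_integral_norm_sq]
  rw [← integral_finsetSum _ fun i _ => hint (g i)]
  refine integral_congr_ae ?_
  have hg' : ∀ᵐ x ∂μ, ∀ i ∈ (s : Set ι), g i x = (m i x : 𝕜) * f x :=
    (ae_ball_iff s.countable_toSet).2 hg
  filter_upwards [hm, hg'] with x hmx hgx
  calc ∑ i ∈ s, ‖g i x‖ ^ 2 = (∑ i ∈ s, m i x ^ 2) * ‖f x‖ ^ 2 := by
        rw [Finset.sum_mul]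
        refine Finset.sum_congr rfl fun i hi => ?_
        rw [hgx i hi, norm_mul, mul_pow, RCLike.norm_ofReal, sq_abs]
    _ = ‖f x‖ ^ 2 := by rw [hmx, one_mul]

theorem pos_of_mul_le_mul_succ {x : ℕ → ℝ} {c d : ℝ} {K : ℕ} (hc : 0 < c) (hd : 0 < d)
    (h1 : 0 < x 1) (hx : ∀ n, 1 ≤ n → n ≤ K → c * x n ≤ d * x (n + 1)) :
    ∀ n, 1 ≤ n → n ≤ K + 1 → 0 < x n := by
  intro n hn
  induction n, hn using Nat.le_induction with
  | base => exact fun _ => h1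
  | succ n hn ih =>
    intro hnK
    have := hx n hn (by omega)
    exact pos_of_mul_pos_right ((mul_pos hc (ih (by omega))).trans_le this) hd.le

structure IsQuarterRamp (θ : ℝ → ℝ) (a b : ℝ) : Prop where
  eq_zero : ∀ r ≤ a, θ r = 0
  eq_pi_div_two : ∀ r, b ≤ r → θ r = π / 2

namespace IsQuarterRamp

variable {θ θ' φ : ℝ → ℝ} {a b a' b' : ℝ}

theorem eq_cos (hθ : IsQuarterRamp θ a b) (h₁ : ∀ r, 0 ≤ r → r ≤ a → φ r = 1)
    (h₂ : ∀ r, a ≤ r → r ≤ b → φ r = cos (θ r)) (h₃ : ∀ r, b < r → φ r = 0) :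
    ∀ r, 0 ≤ r → φ r = cos (θ r) := by
  intro r hr
  rcases le_or_gt r a with ha | ha
  · rw [h₁ r hr ha, hθ.eq_zero r ha, cos_zero]
  rcases le_or_gt r b with hb | hb
  · exact h₂ r ha.le hb
  · rw [h₃ r hb, hθ.eq_pi_div_two r hb.le, cos_pi_div_two]

theorem eq_sin (hθ : IsQuarterRamp θ a b) (h₁ : ∀ r, 0 ≤ r → r < a → φ r = 0)
    (h₂ : ∀ r, a ≤ r → r ≤ b → φ r = sin (θ r)) (h₃ : ∀ r, b ≤ r → φ r = 1) :
    ∀ r, 0 ≤ r → φ r = sin (θ r) := by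
  intro r hr
  rcases lt_or_ge r a with ha | ha
  · rw [h₁ r hr ha, hθ.eq_zero r ha.le, sin_zero]
  rcases le_or_gt r b with hb | hb
  · exact h₂ r ha hb
  · rw [h₃ r hb.le, hθ.eq_pi_div_two r hb.le, sin_pi_div_two]

theorem eq_sin_mul_cos (hθ : IsQuarterRamp θ a b) (hθ' : IsQuarterRamp θ' a' b') (hba : b ≤ a')
    (h₁ : ∀ r, a ≤ r → r ≤ b → φ r = sin (θ r)) (h₂ : ∀ r, b ≤ r → r ≤ a' → φ r = 1)
    (h₃ : ∀ r, a' ≤ r → r ≤ b' → φ r = cos (θ' r))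
    (h₄ : ∀ r, 0 ≤ r → (r < a ∨ b' < r) → φ r = 0) :
    ∀ r, 0 ≤ r → φ r = sin (θ r) * cos (θ' r) := by
  intro r hr
  rcases lt_or_ge r a with ha | ha
  · rw [h₄ r hr (.inl ha), hθ.eq_zero r ha.le, sin_zero, zero_mul]
  rcases le_or_gt r b with hb | hb
  · rw [h₁ r ha hb, hθ'.eq_zero r (hb.trans hba), cos_zero, mul_one]
  rw [hθ.eq_pi_div_two r hb.le, sin_pi_div_two, one_mul]
  rcases le_or_gt r a' with ha' | ha'
  · rw [h₂ r hb.le ha', hθ'.eq_zero r ha', cos_zero]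
  rcases le_or_gt r b' with hb' | hb'
  · exact h₃ r ha'.le hb'
  · rw [h₄ r hr (.inr hb'), hθ'.eq_pi_div_two r hb'.le, cos_pi_div_two]

end IsQuarterRamp

theorem cos_sq_add_sum_sin_mul_cos_sq {θ : ℕ → ℝ} {M : ℕ}
    (h : ∀ n, 1 ≤ n → n ≤ M → sin (θ n) = 1 ∨ cos (θ (n + 1)) = 1) :
    cos (θ 1) ^ 2 + ∑ n ∈ Finset.Icc 1 M, (sin (θ n) * cos (θ (n + 1))) ^ 2
      = cos (θ (M + 1)) ^ 2 := by
  induction M with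
  | zero => simp
  | succ M ih =>
    rw [Finset.sum_Icc_succ_top (by omega), ← add_assoc,
      ih fun n h₁ h₂ => h n h₁ (by omega)]
    rcases h (M + 1) (by omega) le_rfl with h' | h'
    · have hcos := sin_sq_add_cos_sq (θ (M + 1))
      rw [h', one_pow] at hcos
      rw [h', one_mul]
      linarith
    · rw [h', mul_one, one_pow, cos_sq_add_sin_sq]

theorem IsQuarterRamp.cos_sq_add_sum_add_sin_sq_eq_one {θ : ℕ → ℝ → ℝ} {a b : ℕ → ℝ} {M : ℕ}
    (hθ : ∀ n, 1 ≤ n → n ≤ M + 1 → IsQuarterRamp (θ n) (a n) (b n))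
    (hba : ∀ n, 1 ≤ n → n ≤ M → b n ≤ a (n + 1)) (r : ℝ) :
    cos (θ 1 r) ^ 2 + ∑ n ∈ Finset.Icc 1 M, (sin (θ n r) * cos (θ (n + 1) r)) ^ 2
      + sin (θ (M + 1) r) ^ 2 = 1 := by
  have hflat : ∀ n, 1 ≤ n → n ≤ M → sin (θ n r) = 1 ∨ cos (θ (n + 1) r) = 1 := by
    intro n h₁ h₂
    rcases le_or_gt (b n) r with hb | hb
    · left
      rw [(hθ n h₁ (by omega)).eq_pi_div_two r hb, sin_pi_div_two]
    · right
      rw [(hθ (n + 1) (by omega) (by omega)).eq_zero r (hb.le.trans (hba n h₁ h₂)), cos_zero]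
  rw [cos_sq_add_sum_sin_mul_cos_sq (θ := fun n => θ n r) hflat, cos_sq_add_sin_sq]

noncomputable def transitionPhase (β : ℝ → ℝ) (γ c r : ℝ) : ℝ :=
  π / 2 * β ((r - (1 - γ) * c) / (2 * γ * c))

theorem isQuarterRamp_transitionPhase {β : ℝ → ℝ} (hβ_nonpos : ∀ x : ℝ, x ≤ 0 → β x = 0)
    (hβ_one : ∀ x : ℝ, 1 ≤ x → β x = 1) {γ c : ℝ} (hγ : 0 < γ) (hc : 0 < c) :
    IsQuarterRamp (transitionPhase β γ c) ((1 - γ) * c) ((1 + γ) * c) where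
  eq_zero r hr := by
    rw [transitionPhase, hβ_nonpos _ (div_nonpos_of_nonpos_of_nonneg (by linarith) (by positivity)),
      mul_zero]
  eq_pi_div_two r hr := by
    rw [transitionPhase, hβ_one _ ((one_le_div (by positivity)).2 (by linarith)), mul_one]

theorem littlewoodPaley_window_sq_add_sum_sq_eq_one
    {β : ℝ → ℝ} (hβ0 : ∀ x : ℝ, x ≤ 0 → β x = 0) (hβ2 : ∀ x : ℝ, 1 ≤ x → β x = 1)
    {N : ℕ} (hN : 2 ≤ N) {ω : ℕ → ℝ} (hω0 : 0 < ω 1) {γ : ℝ} (hγ : γ ∈ Set.Ioo (0 : ℝ) 1)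
    (hsep : ∀ n, 1 ≤ n → n ≤ N - 2 → (1 + γ) * ω n ≤ (1 - γ) * ω (n + 1))
    {Φ : ℝ → ℝ} {W : ℕ → ℝ → ℝ}
    (hΦ1 : ∀ r : ℝ, 0 ≤ r → r ≤ (1 - γ) * ω 1 → Φ r = 1)
    (hΦ2 : ∀ r : ℝ, (1 - γ) * ω 1 ≤ r → r ≤ (1 + γ) * ω 1 →
      Φ r = cos (transitionPhase β γ (ω 1) r))
    (hΦ3 : ∀ r : ℝ, (1 + γ) * ω 1 < r → Φ r = 0)
    (hW1 : ∀ n, 1 ≤ n → n ≤ N - 2 → ∀ r : ℝ, (1 - γ) * ω n ≤ r → r ≤ (1 + γ) * ω n →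
      W n r = sin (transitionPhase β γ (ω n) r))
    (hW2 : ∀ n, 1 ≤ n → n ≤ N - 2 → ∀ r : ℝ, (1 + γ) * ω n ≤ r → r ≤ (1 - γ) * ω (n + 1) →
      W n r = 1)
    (hW3 : ∀ n, 1 ≤ n → n ≤ N - 2 → ∀ r : ℝ,
      (1 - γ) * ω (n + 1) ≤ r → r ≤ (1 + γ) * ω (n + 1) →
      W n r = cos (transitionPhase β γ (ω (n + 1)) r))
    (hW4 : ∀ n, 1 ≤ n → n ≤ N - 2 → ∀ r : ℝ, 0 ≤ r →
      (r < (1 - γ) * ω n ∨ (1 + γ) * ω (n + 1) < r) → W n r = 0)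
    (hWl1 : ∀ r : ℝ, (1 - γ) * ω (N - 1) ≤ r → r ≤ (1 + γ) * ω (N - 1) →
      W (N - 1) r = sin (transitionPhase β γ (ω (N - 1)) r))
    (hWl2 : ∀ r : ℝ, (1 + γ) * ω (N - 1) ≤ r → W (N - 1) r = 1)
    (hWl3 : ∀ r : ℝ, 0 ≤ r → r < (1 - γ) * ω (N - 1) → W (N - 1) r = 0) (r : ℝ) (hr : 0 ≤ r) :
    Φ r ^ 2 + ∑ n ∈ Finset.Icc 1 (N - 1), W n r ^ 2 = 1 := by
  obtain ⟨hγ0, hγ1⟩ := hγ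
  obtain ⟨M, rfl⟩ : ∃ M, N = M + 2 := ⟨N - 2, by omega⟩
  simp only [show M + 2 - 2 = M by omega, show M + 2 - 1 = M + 1 by omega] at *
  have hω : ∀ n, 1 ≤ n → n ≤ M + 1 → 0 < ω n :=
    pos_of_mul_le_mul_succ (by linarith) (by linarith) hω0 hsep
  have hθ : ∀ n, 1 ≤ n → n ≤ M + 1 →
      IsQuarterRamp (transitionPhase β γ (ω n)) ((1 - γ) * ω n) ((1 + γ) * ω n) :=
    fun n h₁ h₂ => isQuarterRamp_transitionPhase hβ0 hβ2 hγ0 (hω n h₁ h₂)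
  have hW : ∀ n ∈ Finset.Icc 1 M, W n r ^ 2
      = (sin (transitionPhase β γ (ω n) r) * cos (transitionPhase β γ (ω (n + 1)) r)) ^ 2 := by
    intro n hn
    obtain ⟨h₁, h₂⟩ := Finset.mem_Icc.1 hn
    rw [(hθ n h₁ (by omega)).eq_sin_mul_cos (hθ (n + 1) (by omega) (by omega)) (hsep n h₁ h₂)
      (hW1 n h₁ h₂) (hW2 n h₁ h₂) (hW3 n h₁ h₂) (hW4 n h₁ h₂) r hr]
  rw [Finset.sum_Icc_succ_top (by omega), Finset.sum_congr rfl hW, ← add_assoc,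
    (hθ 1 le_rfl (by omega)).eq_cos hΦ1 hΦ2 hΦ3 r hr,
    (hθ (M + 1) (by omega) le_rfl).eq_sin hWl3 hWl1 hWl2 r hr]
  exact IsQuarterRamp.cos_sq_add_sum_add_sin_sq_eq_one hθ hsep r

theorem empirical_LP_tight_frame_general
    (β : ℝ → ℝ)
    (hβ0 : ∀ x : ℝ, x ≤ 0 → β x = 0)
    (hβ2 : ∀ x : ℝ, 1 ≤ x → β x = 1)
    (N : ℕ) (hN : 2 ≤ N) (ω : ℕ → ℝ)
    (hω0 : 0 < ω 1)
    (γ : ℝ) (hγ : γ ∈ Set.Ioo (0 : ℝ) 1)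
    (hsep : ∀ n, 1 ≤ n → n ≤ N - 2 → (1 + γ) * ω n ≤ (1 - γ) * ω (n + 1))
    (Φ : ℝ → ℝ) (W : ℕ → ℝ → ℝ)
    (hΦ1 : ∀ r : ℝ, 0 ≤ r → r ≤ (1 - γ) * ω 1 → Φ r = 1)
    (hΦ2 : ∀ r : ℝ, (1 - γ) * ω 1 ≤ r → r ≤ (1 + γ) * ω 1 →
      Φ r = Real.cos (Real.pi / 2 * β ((r - (1 - γ) * ω 1) / (2 * γ * ω 1))))
    (hΦ3 : ∀ r : ℝ, (1 + γ) * ω 1 < r → Φ r = 0)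
    (hW1 : ∀ n, 1 ≤ n → n ≤ N - 2 → ∀ r : ℝ, (1 - γ) * ω n ≤ r → r ≤ (1 + γ) * ω n →
      W n r = Real.sin (Real.pi / 2 * β ((r - (1 - γ) * ω n) / (2 * γ * ω n))))
    (hW2 : ∀ n, 1 ≤ n → n ≤ N - 2 → ∀ r : ℝ, (1 + γ) * ω n ≤ r → r ≤ (1 - γ) * ω (n + 1) →
      W n r = 1)
    (hW3 : ∀ n, 1 ≤ n → n ≤ N - 2 → ∀ r : ℝ,
      (1 - γ) * ω (n + 1) ≤ r → r ≤ (1 + γ) * ω (n + 1) →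
      W n r = Real.cos (Real.pi / 2 * β ((r - (1 - γ) * ω (n + 1)) / (2 * γ * ω (n + 1)))))
    (hW4 : ∀ n, 1 ≤ n → n ≤ N - 2 → ∀ r : ℝ, 0 ≤ r →
      (r < (1 - γ) * ω n ∨ (1 + γ) * ω (n + 1) < r) → W n r = 0)
    (hWl1 : ∀ r : ℝ, (1 - γ) * ω (N - 1) ≤ r → r ≤ (1 + γ) * ω (N - 1) →
      W (N - 1) r = Real.sin (Real.pi / 2 * β ((r - (1 - γ) * ω (N - 1)) / (2 * γ * ω (N - 1)))))
    (hWl2 : ∀ r : ℝ, (1 + γ) * ω (N - 1) ≤ r → W (N - 1) r = 1)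
    (hWl3 : ∀ r : ℝ, 0 ≤ r → r < (1 - γ) * ω (N - 1) → W (N - 1) r = 0)
    (F : Lp ℂ 2 (volume : Measure (EuclideanSpace ℝ (Fin 2))) ≃ₗᵢ[ℂ]
      Lp ℂ 2 (volume : Measure (EuclideanSpace ℝ (Fin 2)))) :
    ∀ (f : Lp ℂ 2 (volume : Measure (EuclideanSpace ℝ (Fin 2))))
      (g : ℕ → Lp ℂ 2 (volume : Measure (EuclideanSpace ℝ (Fin 2)))),
      ((g 0 : EuclideanSpace ℝ (Fin 2) → ℂ) =ᵐ[volume]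
        fun x => (Φ ‖x‖ : ℂ) * (F f : EuclideanSpace ℝ (Fin 2) → ℂ) x) →
      (∀ n, 1 ≤ n → n ≤ N - 1 →
        (g n : EuclideanSpace ℝ (Fin 2) → ℂ) =ᵐ[volume]
          fun x => (W n ‖x‖ : ℂ) * (F f : EuclideanSpace ℝ (Fin 2) → ℂ) x) →
      ‖F.symm (g 0)‖ ^ 2 + ∑ n ∈ Finset.Icc 1 (N - 1), ‖F.symm (g n)‖ ^ 2
        = ‖f‖ ^ 2 := by
  intro f g hg0 hgW
  have hpart := littlewoodPaley_window_sq_add_sum_sq_eq_one hβ0 hβ2 hN hω0 hγ hsep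
    hΦ1 hΦ2 hΦ3 hW1 hW2 hW3 hW4 hWl1 hWl2 hWl3
  have h0 : 0 ∉ Finset.Icc 1 (N - 1) := by simp
  have hne : ∀ n ∈ Finset.Icc 1 (N - 1), n ≠ 0 := fun n hn => by
    rintro rfl; exact h0 hn
  have hPlancherel := L2.sum_norm_sq_eq_of_sum_sq_eq_one (insert 0 (Finset.Icc 1 (N - 1)))
    (m := fun n x => if n = 0 then Φ ‖x‖ else W n ‖x‖) ?_ (F f) g ?_
  · simpa only [LinearIsometryEquiv.norm_map, Finset.sum_insert h0] using hPlancherel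
  · refine ae_of_all _ fun x => ?_
    rw [Finset.sum_insert h0, if_pos rfl,
      Finset.sum_congr rfl fun n hn => by rw [if_neg (hne n hn)]]
    exact hpart _ (norm_nonneg x)
  · intro n hn
    rcases Finset.mem_insert.1 hn with rfl | hn
    · simpa using hg0
    · obtain ⟨h₁, h₂⟩ := Finset.mem_Icc.1 hn
      simpa [if_neg (hne n hn)] using hgW n h₁ h₂

/-- The 2D empirical Littlewood–Paley wavelet family is a tight frame of `L²(ℝ²)`:
with radial multipliers `m₀(ω) = Φ(|ω|)` and `mₙ(ω) = Wₙ(|ω|)`,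
`‖𝓕⁻¹(m₀·𝓕 f)‖² + Σ_{n=1}^{N−1} ‖𝓕⁻¹(mₙ·𝓕 f)‖² = ‖f‖²` for every `f ∈ L²(ℝ²)`. -/
theorem empirical_LP_tight_frame
    (β : ℝ → ℝ)
    (hβ0 : ∀ x : ℝ, x ≤ 0 → β x = 0)
    (hβ1 : ∀ x ∈ Set.Icc (0 : ℝ) 1, β x = x ^ 4 * (35 - 84 * x + 70 * x ^ 2 - 20 * x ^ 3))
    (hβ2 : ∀ x : ℝ, 1 ≤ x → β x = 1)
    (N : ℕ) (hN : 2 ≤ N) (ω : ℕ → ℝ)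
    (hω0 : 0 < ω 1)
    (hωmono : ∀ n, 1 ≤ n → n ≤ N - 2 → ω n < ω (n + 1))
    (γ : ℝ) (hγ : γ ∈ Set.Ioo (0 : ℝ) 1)
    (hsep : ∀ n, 1 ≤ n → n ≤ N - 2 → (1 + γ) * ω n ≤ (1 - γ) * ω (n + 1))
    (Φ : ℝ → ℝ) (W : ℕ → ℝ → ℝ)
    (hΦ1 : ∀ r : ℝ, 0 ≤ r → r ≤ (1 - γ) * ω 1 → Φ r = 1)
    (hΦ2 : ∀ r : ℝ, (1 - γ) * ω 1 ≤ r → r ≤ (1 + γ) * ω 1 →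
      Φ r = Real.cos (Real.pi / 2 * β ((r - (1 - γ) * ω 1) / (2 * γ * ω 1))))
    (hΦ3 : ∀ r : ℝ, (1 + γ) * ω 1 < r → Φ r = 0)
    (hW1 : ∀ n, 1 ≤ n → n ≤ N - 2 → ∀ r : ℝ, (1 - γ) * ω n ≤ r → r ≤ (1 + γ) * ω n →
      W n r = Real.sin (Real.pi / 2 * β ((r - (1 - γ) * ω n) / (2 * γ * ω n))))
    (hW2 : ∀ n, 1 ≤ n → n ≤ N - 2 → ∀ r : ℝ, (1 + γ) * ω n ≤ r → r ≤ (1 - γ) * ω (n + 1) →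
      W n r = 1)
    (hW3 : ∀ n, 1 ≤ n → n ≤ N - 2 → ∀ r : ℝ,
      (1 - γ) * ω (n + 1) ≤ r → r ≤ (1 + γ) * ω (n + 1) →
      W n r = Real.cos (Real.pi / 2 * β ((r - (1 - γ) * ω (n + 1)) / (2 * γ * ω (n + 1)))))
    (hW4 : ∀ n, 1 ≤ n → n ≤ N - 2 → ∀ r : ℝ, 0 ≤ r →
      (r < (1 - γ) * ω n ∨ (1 + γ) * ω (n + 1) < r) → W n r = 0)
    (hWl1 : ∀ r : ℝ, (1 - γ) * ω (N - 1) ≤ r → r ≤ (1 + γ) * ω (N - 1) →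
      W (N - 1) r = Real.sin (Real.pi / 2 * β ((r - (1 - γ) * ω (N - 1)) / (2 * γ * ω (N - 1)))))
    (hWl2 : ∀ r : ℝ, (1 + γ) * ω (N - 1) ≤ r → W (N - 1) r = 1)
    (hWl3 : ∀ r : ℝ, 0 ≤ r → r < (1 - γ) * ω (N - 1) → W (N - 1) r = 0)
    (F : Lp ℂ 2 (volume : Measure (EuclideanSpace ℝ (Fin 2))) ≃ₗᵢ[ℂ]
      Lp ℂ 2 (volume : Measure (EuclideanSpace ℝ (Fin 2))))
    (hF : ∀ (f : EuclideanSpace ℝ (Fin 2) → ℂ) (hf1 : Integrable f)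
      (hf2 : MemLp f 2 (volume : Measure (EuclideanSpace ℝ (Fin 2)))),
      (F (hf2.toLp f) : EuclideanSpace ℝ (Fin 2) → ℂ) =ᵐ[volume] 𝓕 f) :
    ∀ (f : Lp ℂ 2 (volume : Measure (EuclideanSpace ℝ (Fin 2))))
      (g : ℕ → Lp ℂ 2 (volume : Measure (EuclideanSpace ℝ (Fin 2)))),
      ((g 0 : EuclideanSpace ℝ (Fin 2) → ℂ) =ᵐ[volume]
        fun x => (Φ ‖x‖ : ℂ) * (F f : EuclideanSpace ℝ (Fin 2) → ℂ) x) →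
      (∀ n, 1 ≤ n → n ≤ N - 1 →
        (g n : EuclideanSpace ℝ (Fin 2) → ℂ) =ᵐ[volume]
          fun x => (W n ‖x‖ : ℂ) * (F f : EuclideanSpace ℝ (Fin 2) → ℂ) x) →
      ‖F.symm (g 0)‖ ^ 2 + ∑ n ∈ Finset.Icc 1 (N - 1), ‖F.symm (g n)‖ ^ 2
        = ‖f‖ ^ 2 :=
  empirical_LP_tight_frame_general β hβ0 hβ2 N hN ω hω0 γ hγ hsep Φ W hΦ1 hΦ2 hΦ3 hW1 hW2 hW3 hW4
    hWl1 hWl2 hWl3 F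
end

section
/- Let a₀, …, a_{N−1} : ℝ → ℂ and b₀, …, b_{M−1} : ℝ → ℂ be measurable with Σ_{n=0}^{N−1} |aₙ(x)|² = 1 for a.e. x ∈ ℝ and Σ_{m=0}^{M−1} |bₘ(y)|² = 1 for a.e. y ∈ ℝ. Define the separable multipliers m_{n,m}(ω₁, ω₂) = aₙ(ω₁)·bₘ(ω₂) on ℝ². Then for every f ∈ L²(ℝ²), Σ_{n=0}^{N−1} Σ_{m=0}^{M−1} ‖𝓕⁻¹( conj(m_{n,m}) · 𝓕(f) )‖_{L²}² = ‖f‖_{L²}²; i.e., the 2D tensor empirical wavelet family is a tight frame of L²(ℝ²). -/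
/-!
Pointwise in frequency, `Σₙ Σₘ |conj(aₙ(ω₁) bₘ(ω₂)) 𝓕f(ω)|² = (Σₙ |aₙ(ω₁)|²)(Σₘ |bₘ(ω₂)|²) |𝓕f(ω)|²
= |𝓕f(ω)|²` for almost every `ω`, because a null set of `ℝ` pulls back to a null set of `ℝ²` under
either coordinate. Integrating gives `Σₙ Σₘ ‖gₙₘ‖² = ‖𝓕f‖²`, and the Fourier–Plancherel
transform and its inverse are isometries.
-/

open FourierTransform MeasureTheory Finset Filter

namespace MeasureTheory

section L2

variable {α E : Type*} [MeasurableSpace α] {μ : Measure α} [NormedAddCommGroup E]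

theorem L2.norm_sq_eq_integral_norm_sq_s11 (f : Lp E 2 μ) : ‖f‖ ^ 2 = ∫ x, ‖f x‖ ^ 2 ∂μ := by
  have hint : 0 ≤ ∫ x, ‖f x‖ ^ 2 ∂μ := integral_nonneg fun x => by positivity
  rw [Lp.norm_def, (Lp.memLp f).eLpNorm_eq_integral_rpow_norm two_ne_zero ENNReal.ofNat_ne_top,
    ENNReal.toReal_ofReal (by positivity)]
  simp only [ENNReal.toReal_ofNat, Real.rpow_two]
  rw [← Real.rpow_natCast, ← Real.rpow_mul hint]
  norm_num

theorem L2.sum_norm_sq_eq_of_ae {ι : Type*} (s : Finset ι) (g : ι → Lp E 2 μ) (f : Lp E 2 μ)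
    (h : ∀ᵐ x ∂μ, ∑ i ∈ s, ‖g i x‖ ^ 2 = ‖f x‖ ^ 2) :
    ∑ i ∈ s, ‖g i‖ ^ 2 = ‖f‖ ^ 2 := by
  simp only [L2.norm_sq_eq_integral_norm_sq_s11]
  rw [← integral_finsetSum s fun i _ => (Lp.memLp (g i)).integrable_norm_pow two_ne_zero]
  exact integral_congr_ae h

end L2

end MeasureTheory

theorem EuclideanSpace.ae_apply {ι : Type*} [Fintype ι] {p : ℝ → Prop} (i : ι)
    (h : ∀ᵐ t, p t) : ∀ᵐ x : EuclideanSpace ℝ ι, p (x i) :=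
  (EuclideanSpace.volume_preserving_symm_measurableEquiv_toLp ι).quasiMeasurePreserving
    |>.tendsto_ae.eventually (Measure.tendsto_eval_ae_ae.eventually h)

theorem sum_sum_norm_sq_conj_mul_mul_eq {ι κ : Type*} (s : Finset ι) (t : Finset κ)
    (a : ι → ℂ) (b : κ → ℂ) (ha : ∑ n ∈ s, ‖a n‖ ^ 2 = 1) (hb : ∑ m ∈ t, ‖b m‖ ^ 2 = 1)
    (z : ℂ) : ∑ n ∈ s, ∑ m ∈ t, ‖starRingEnd ℂ (a n * b m) * z‖ ^ 2 = ‖z‖ ^ 2 := by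
  simp only [norm_mul, Complex.norm_conj, mul_pow, ← sum_mul, ← mul_sum, ha, hb, one_mul]

theorem tensor_EWT_tight_frame_general (N M : ℕ)
    (a b : ℕ → ℝ → ℂ)
    (ha : ∀ᵐ x ∂(volume : Measure ℝ), ∑ n ∈ Finset.range N, ‖a n x‖ ^ 2 = 1)
    (hb : ∀ᵐ y ∂(volume : Measure ℝ), ∑ m ∈ Finset.range M, ‖b m y‖ ^ 2 = 1)
    (F : Lp ℂ 2 (volume : Measure (EuclideanSpace ℝ (Fin 2))) ≃ₗᵢ[ℂ]
      Lp ℂ 2 (volume : Measure (EuclideanSpace ℝ (Fin 2)))) :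
    ∀ (f : Lp ℂ 2 (volume : Measure (EuclideanSpace ℝ (Fin 2))))
      (g : ℕ → ℕ → Lp ℂ 2 (volume : Measure (EuclideanSpace ℝ (Fin 2)))),
      (∀ n < N, ∀ m < M,
        (g n m : EuclideanSpace ℝ (Fin 2) → ℂ) =ᵐ[volume]
          fun x => (starRingEnd ℂ) (a n (x 0) * b m (x 1)) *
            (F f : EuclideanSpace ℝ (Fin 2) → ℂ) x) →
      ∑ n ∈ Finset.range N, ∑ m ∈ Finset.range M, ‖F.symm (g n m)‖ ^ 2
        = ‖f‖ ^ 2 := by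
  intro f g hg
  have hg_ae : ∀ᵐ x ∂volume, ∀ n ∈ range N, ∀ m ∈ range M,
      g n m x = starRingEnd ℂ (a n (x 0) * b m (x 1)) * F f x :=
    (eventually_all_finset _).2 fun n hn => (eventually_all_finset _).2 fun m hm =>
      hg n (mem_range.1 hn) m (mem_range.1 hm)
  have hpointwise : ∀ᵐ x ∂volume,
      ∑ p ∈ range N ×ˢ range M, ‖g p.1 p.2 x‖ ^ 2 = ‖F f x‖ ^ 2 := by
    filter_upwards [EuclideanSpace.ae_apply 0 ha, EuclideanSpace.ae_apply 1 hb, hg_ae]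
      with x hax hbx hgx
    rw [sum_product, ← sum_sum_norm_sq_conj_mul_mul_eq _ _ _ _ hax hbx]
    exact sum_congr rfl fun n hn => sum_congr rfl fun m hm => by rw [hgx n hn m hm]
  calc ∑ n ∈ range N, ∑ m ∈ range M, ‖F.symm (g n m)‖ ^ 2
      = ∑ p ∈ range N ×ˢ range M, ‖g p.1 p.2‖ ^ 2 := by
        simp only [LinearIsometryEquiv.norm_map, sum_product]
    _ = ‖F f‖ ^ 2 := L2.sum_norm_sq_eq_of_ae _ _ _ hpointwise
    _ = ‖f‖ ^ 2 := by rw [F.norm_map]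

/-- The 2D tensor empirical wavelet family is a tight frame of `L²(ℝ²)`: if
`Σₙ |aₙ(x)|² = 1` a.e. and `Σₘ |bₘ(y)|² = 1` a.e., then for the separable
multipliers `m_{n,m}(ω₁,ω₂) = aₙ(ω₁)·bₘ(ω₂)` and every `f ∈ L²(ℝ²)`,
`Σₙ Σₘ ‖𝓕⁻¹(conj(m_{n,m})·𝓕 f)‖² = ‖f‖²`. -/
theorem tensor_EWT_tight_frame (N M : ℕ) (hN : 1 ≤ N) (hM : 1 ≤ M)
    (a b : ℕ → ℝ → ℂ)
    (ha_meas : ∀ n < N, Measurable (a n))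
    (hb_meas : ∀ m < M, Measurable (b m))
    (ha : ∀ᵐ x ∂(volume : Measure ℝ), ∑ n ∈ Finset.range N, ‖a n x‖ ^ 2 = 1)
    (hb : ∀ᵐ y ∂(volume : Measure ℝ), ∑ m ∈ Finset.range M, ‖b m y‖ ^ 2 = 1)
    (F : Lp ℂ 2 (volume : Measure (EuclideanSpace ℝ (Fin 2))) ≃ₗᵢ[ℂ]
      Lp ℂ 2 (volume : Measure (EuclideanSpace ℝ (Fin 2))))
    (hF : ∀ (f : EuclideanSpace ℝ (Fin 2) → ℂ) (hf1 : Integrable f)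
      (hf2 : MemLp f 2 (volume : Measure (EuclideanSpace ℝ (Fin 2)))),
      (F (hf2.toLp f) : EuclideanSpace ℝ (Fin 2) → ℂ) =ᵐ[volume] 𝓕 f) :
    ∀ (f : Lp ℂ 2 (volume : Measure (EuclideanSpace ℝ (Fin 2))))
      (g : ℕ → ℕ → Lp ℂ 2 (volume : Measure (EuclideanSpace ℝ (Fin 2)))),
      (∀ n < N, ∀ m < M,
        (g n m : EuclideanSpace ℝ (Fin 2) → ℂ) =ᵐ[volume]
          fun x => (starRingEnd ℂ) (a n (x 0) * b m (x 1)) *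
            (F f : EuclideanSpace ℝ (Fin 2) → ℂ) x) →
      ∑ n ∈ Finset.range N, ∑ m ∈ Finset.range M, ‖F.symm (g n m)‖ ^ 2
        = ‖f‖ ^ 2 :=
  tensor_EWT_tight_frame_general N M a b ha hb F
end

section
/- Let M ≥ 1, let θ¹ < θ² < … < θ^M < θ¹ + π be real numbers with θ^{M+1} := θ¹ + π, and let Δθ > 0 satisfy 2Δθ ≤ θ^{m+1} − θ^m for every 1 ≤ m ≤ M. Define V₁, …, V_M : ℝ → ℝ by: Vₘ(θ) = sin((π/2)·β((θ − θ^m + Δθ)/(2Δθ))) for θ^m − Δθ ≤ θ ≤ θ^m + Δθ, Vₘ(θ) = 1 for θ^m + Δθ ≤ θ ≤ θ^{m+1} − Δθ, Vₘ(θ) = cos((π/2)·β((θ − θ^{m+1} + Δθ)/(2Δθ))) for θ^{m+1} − Δθ ≤ θ ≤ θ^{m+1} + Δθ, and Vₘ(θ) = 0 otherwise. Then for every θ ∈ [θ¹, θ¹ + π), Σ_{m=1}^{M} ( Vₘ(θ − π)² + Vₘ(θ)² + Vₘ(θ + π)² ) = 1; i.e., the π-periodizations of the angular windows form a partition of unity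 in the squares. -/
lemma angular_sum_two_aux {s : Finset ℕ} {f : ℕ → ℝ} {a b : ℕ} {A B : ℝ}
    (ha : a ∈ s) (hb : b ∈ s)
    (hfa : a ≠ b → f a = A) (hfb : a ≠ b → f b = B) (hfab : a = b → f a = A + B)
    (h0 : ∀ m ∈ s, m ≠ a → m ≠ b → f m = 0) :
    ∑ m ∈ s, f m = A + B := by
  classical
  by_cases hab : a = b
  · subst hab
    rw [Finset.sum_eq_single_of_mem a ha (fun m hm hma => h0 m hm hma hma)]
    exact hfab rfl
  · rw [← Finset.add_sum_erase s f ha,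
      Finset.sum_eq_single_of_mem b (Finset.mem_erase.mpr ⟨Ne.symm hab, hb⟩)
        (fun m hm hmb => h0 m (Finset.mem_erase.mp hm).2 (Finset.mem_erase.mp hm).1 hmb),
      hfa hab, hfb hab]

/-- The π-periodizations of the empirical curvelet angular windows form a
partition of unity in the squares: with boundaries `θ¹ < … < θ^M < θ¹ + π`,
`θ^{M+1} = θ¹ + π`, and transition half-width `Δθ` with `2Δθ ≤ θ^{m+1} − θ^m`,
one has `Σ_{m=1}^{M} (Vₘ(θ−π)² + Vₘ(θ)² + Vₘ(θ+π)²) = 1` for `θ ∈ [θ¹, θ¹+π)`. -/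
theorem angular_windows_partition_of_unity
    (β : ℝ → ℝ)
    (hβ0 : ∀ x : ℝ, x ≤ 0 → β x = 0)
    (hβ1 : ∀ x ∈ Set.Icc (0 : ℝ) 1, β x = x ^ 4 * (35 - 84 * x + 70 * x ^ 2 - 20 * x ^ 3))
    (hβ2 : ∀ x : ℝ, 1 ≤ x → β x = 1)
    (M : ℕ) (hM : 1 ≤ M) (θ : ℕ → ℝ)
    (hθmono : ∀ m, 1 ≤ m → m < M → θ m < θ (m + 1))
    (hθlt : θ M < θ 1 + Real.pi)
    (hθtop : θ (M + 1) = θ 1 + Real.pi)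
    (Δθ : ℝ) (hΔθ : 0 < Δθ)
    (hsep : ∀ m, 1 ≤ m → m ≤ M → 2 * Δθ ≤ θ (m + 1) - θ m)
    (V : ℕ → ℝ → ℝ)
    (hV1 : ∀ m, 1 ≤ m → m ≤ M → ∀ t : ℝ, θ m - Δθ ≤ t → t ≤ θ m + Δθ →
      V m t = Real.sin (Real.pi / 2 * β ((t - θ m + Δθ) / (2 * Δθ))))
    (hV2 : ∀ m, 1 ≤ m → m ≤ M → ∀ t : ℝ, θ m + Δθ ≤ t → t ≤ θ (m + 1) - Δθ →
      V m t = 1)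
    (hV3 : ∀ m, 1 ≤ m → m ≤ M → ∀ t : ℝ, θ (m + 1) - Δθ ≤ t → t ≤ θ (m + 1) + Δθ →
      V m t = Real.cos (Real.pi / 2 * β ((t - θ (m + 1) + Δθ) / (2 * Δθ))))
    (hV4 : ∀ m, 1 ≤ m → m ≤ M → ∀ t : ℝ, (t < θ m - Δθ ∨ θ (m + 1) + Δθ < t) →
      V m t = 0) :
    ∀ t : ℝ, θ 1 ≤ t → t < θ 1 + Real.pi →
      ∑ m ∈ Finset.Icc 1 M,
        ((V m (t - Real.pi)) ^ 2 + (V m t) ^ 2 + (V m (t + Real.pi)) ^ 2) = 1 := by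
  classical
  have hstep : ∀ m, 1 ≤ m → m ≤ M → θ m + 2 * Δθ ≤ θ (m + 1) := by
    intro m h1 h2; have := hsep m h1 h2; linarith
  have hmono : ∀ a b, 1 ≤ a → a ≤ b → b ≤ M + 1 → θ a ≤ θ b := by
    intro a b ha hab hb
    induction b, hab using Nat.le_induction with
    | base => exact le_rfl
    | succ n hn ih =>
      have h1 : θ a ≤ θ n := ih (by omega)
      have h2 := hstep n (by omega) (by omega)
      linarith
  have hmono2 : ∀ a b, 1 ≤ a → a < b → b ≤ M + 1 → θ a + 2 * Δθ ≤ θ b := by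
    intro a b ha hab hb
    have h1 := hstep a ha (by omega)
    have h2 := hmono (a + 1) b (by omega) (by omega) hb
    linarith
  have h2Δ : (2 : ℝ) * Δθ ≠ 0 := by positivity
  have hzero : ∀ m, 1 ≤ m → m ≤ M → ∀ s : ℝ,
      s ≤ θ m - Δθ ∨ θ (m + 1) + Δθ ≤ s → V m s = 0 := by
    intro m h1 h2 s hs
    rcases hs with hs | hs
    · rcases lt_or_eq_of_le hs with h | h
      · exact hV4 m h1 h2 s (Or.inl h)
      · rw [hV1 m h1 h2 s h.ge (by linarith)]
        have harg : (s - θ m + Δθ) / (2 * Δθ) = 0 := by rw [h]; ring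
        rw [harg, hβ0 0 le_rfl, mul_zero, Real.sin_zero]
    · rcases lt_or_eq_of_le hs with h | h
      · exact hV4 m h1 h2 s (Or.inr h)
      · rw [hV3 m h1 h2 s (by linarith) (le_of_eq h.symm)]
        have harg : (s - θ (m + 1) + Δθ) / (2 * Δθ) = 1 := by
          rw [div_eq_one_iff_eq h2Δ, ← h]; ring
        rw [harg, hβ2 1 le_rfl, mul_one, Real.cos_pi_div_two]
  intro t ht1 ht2
  have z1gen : ∀ k, 2 ≤ k → k ≤ M → V k (t - Real.pi) = 0 := by
    intro k h2 hk
    apply hzero k (by omega) hk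
    left
    have := hmono2 1 k le_rfl (by omega) (by omega)
    linarith
  have z1top : t ≤ θ (M + 1) - Δθ → ∀ k, 1 ≤ k → k ≤ M → V k (t - Real.pi) = 0 := by
    intro htop k h1 hk
    by_cases hk1 : k = 1
    · subst hk1
      apply hzero 1 le_rfl hM
      left
      rw [hθtop] at htop
      linarith
    · exact z1gen k (by omega) hk
  have z3gen : ∀ k, 1 ≤ k → k + 1 ≤ M → V k (t + Real.pi) = 0 := by
    intro k h1 hk
    apply hzero k h1 (by omega)
    right
    have := hmono2 (k + 1) (M + 1) (by omega) (by omega) le_rfl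
    rw [hθtop] at this
    linarith
  have z3bot : θ 1 + Δθ ≤ t → ∀ k, 1 ≤ k → k ≤ M → V k (t + Real.pi) = 0 := by
    intro hbot k h1 hk
    by_cases hkM : k = M
    · subst hkM
      apply hzero k h1 le_rfl
      right
      rw [hθtop]
      linarith
    · exact z3gen k h1 (by omega)
  obtain ⟨m, hm1, hmM, hmle, hmlt⟩ : ∃ m, 1 ≤ m ∧ m ≤ M ∧ θ m ≤ t ∧ t < θ (m + 1) := by
    by_contra hcon
    push_neg at hcon
    have hall : ∀ k, k ≤ M → θ (k + 1) ≤ t := by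
      intro k hk
      induction k with
      | zero => simpa using ht1
      | succ n ih => exact hcon (n + 1) (by omega) (by omega) (ih (by omega))
    have := hall M le_rfl
    rw [hθtop] at this
    linarith
  have z2low : ∀ k, 1 ≤ k → k + 1 < m → V k t = 0 := by
    intro k h1 hk
    apply hzero k h1 (by omega)
    right
    have := hmono2 (k + 1) m (by omega) hk (by omega)
    linarith
  have z2high : ∀ k, m + 1 < k → k ≤ M → V k t = 0 := by
    intro k hk h2
    apply hzero k (by omega) h2
    left
    have := hmono2 (m + 1) k (by omega) hk (by omega)
    linarith
  rcases lt_or_ge t (θ m + Δθ) with hc1 | hc1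
  · -- transition region near θ m
    rcases eq_or_lt_of_le hm1 with hm1' | hm1'
    · -- m = 1 : wrap-around pairing of V 1 at t with V M at t + π
      subst hm1'
      have hz1 : ∀ k, 1 ≤ k → k ≤ M → V k (t - Real.pi) = 0 := by
        have h := hmono2 1 (M + 1) le_rfl (by omega) le_rfl
        exact z1top (by linarith)
      have hz2 : ∀ k, 2 ≤ k → k ≤ M → V k t = 0 := by
        intro k h2 hk
        apply hzero k (by omega) hk
        left
        have := hmono2 1 k le_rfl (by omega) (by omega)
        linarith
      have hVM : V M (t + Real.pi) =
          Real.cos (Real.pi / 2 * β ((t - θ 1 + Δθ) / (2 * Δθ))) := by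
        rw [hV3 M hM le_rfl (t + Real.pi) (by rw [hθtop]; linarith) (by rw [hθtop]; linarith),
          show t + Real.pi - θ (M + 1) + Δθ = t - θ 1 + Δθ by rw [hθtop]; ring]
      refine (angular_sum_two_aux (s := Finset.Icc 1 M) (a := 1) (b := M)
        (A := Real.sin (Real.pi / 2 * β ((t - θ 1 + Δθ) / (2 * Δθ))) ^ 2)
        (B := Real.cos (Real.pi / 2 * β ((t - θ 1 + Δθ) / (2 * Δθ))) ^ 2)
        (Finset.mem_Icc.mpr ⟨le_rfl, hM⟩) (Finset.mem_Icc.mpr ⟨hM, le_rfl⟩)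
        ?_ ?_ ?_ ?_).trans (Real.sin_sq_add_cos_sq _)
      · intro hne
        rw [hz1 1 le_rfl hM, hV1 1 le_rfl hM t (by linarith) (by linarith),
          z3gen 1 le_rfl (by omega)]
        ring
      · intro hne
        rw [hz1 M hM le_rfl, hz2 M (by omega) le_rfl, hVM]
        ring
      · intro hMe
        subst hMe
        rw [hz1 1 le_rfl hM, hV1 1 le_rfl hM t (by linarith) (by linarith), hVM]
        ring
      · intro k hk hka hkb
        rw [Finset.mem_Icc] at hk
        rw [hz1 k hk.1 hk.2, hz2 k (by omega) hk.2, z3gen k hk.1 (by omega)]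
        ring
    · -- 2 ≤ m : interior transition, pair V (m-1) with V m
      obtain ⟨n, rfl⟩ : ∃ n, m = n + 1 := ⟨m - 1, by omega⟩
      have hz1 : ∀ k, 1 ≤ k → k ≤ M → V k (t - Real.pi) = 0 := by
        apply z1top
        have h1 := hstep (n + 1) (by omega) hmM
        have h2 := hmono (n + 2) (M + 1) (by omega) (by omega) le_rfl
        linarith
      have hz3 : ∀ k, 1 ≤ k → k ≤ M → V k (t + Real.pi) = 0 := by
        apply z3bot
        have := hmono2 1 (n + 1) le_rfl (by omega) (by omega)
        linarith
      refine (angular_sum_two_aux (s := Finset.Icc 1 M) (a := n) (b := n + 1)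
        (A := Real.cos (Real.pi / 2 * β ((t - θ (n + 1) + Δθ) / (2 * Δθ))) ^ 2)
        (B := Real.sin (Real.pi / 2 * β ((t - θ (n + 1) + Δθ) / (2 * Δθ))) ^ 2)
        (Finset.mem_Icc.mpr ⟨by omega, by omega⟩) (Finset.mem_Icc.mpr ⟨by omega, by omega⟩)
        ?_ ?_ ?_ ?_).trans (Real.cos_sq_add_sin_sq _)
      · intro _
        rw [hz1 n (by omega) (by omega), hz3 n (by omega) (by omega),
          hV3 n (by omega) (by omega) t (by linarith) (by linarith)]
        ring
      · intro _
        rw [hz1 (n + 1) (by omega) hmM, hz3 (n + 1) (by omega) hmM,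
          hV1 (n + 1) (by omega) hmM t (by linarith) (by linarith)]
        ring
      · intro h; omega
      · intro k hk hka hkb
        rw [Finset.mem_Icc] at hk
        have hz2 : V k t = 0 := by
          rcases lt_trichotomy k (n + 1) with h | h | h
          · exact z2low k hk.1 (by omega)
          · exact absurd h hkb
          · rcases eq_or_lt_of_le (show n + 2 ≤ k by omega) with he | hgt
            · apply hzero k (by omega) hk.2
              left
              have := hstep (n + 1) (by omega) (by omega)
              rw [← he]
              linarith
            · exact z2high k (by omega) hk.2
        rw [hz1 k hk.1 hk.2, hz2, hz3 k hk.1 hk.2]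
        ring
  · rcases le_or_gt t (θ (m + 1) - Δθ) with hc2 | hc2
    · -- plateau region
      have hz1 : ∀ k, 1 ≤ k → k ≤ M → V k (t - Real.pi) = 0 := by
        apply z1top
        have := hmono (m + 1) (M + 1) (by omega) (by omega) le_rfl
        linarith
      have hz3 : ∀ k, 1 ≤ k → k ≤ M → V k (t + Real.pi) = 0 := by
        apply z3bot
        have := hmono 1 m le_rfl hm1 (by omega)
        linarith
      refine (angular_sum_two_aux (s := Finset.Icc 1 M) (a := m) (b := m)
        (A := 1) (B := 0)
        (Finset.mem_Icc.mpr ⟨hm1, hmM⟩) (Finset.mem_Icc.mpr ⟨hm1, hmM⟩)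
        (fun h => absurd rfl h) (fun h => absurd rfl h) ?_ ?_).trans (by norm_num)
      · intro _
        rw [hz1 m hm1 hmM, hz3 m hm1 hmM, hV2 m hm1 hmM t hc1 hc2]
        ring
      · intro k hk hka _
        rw [Finset.mem_Icc] at hk
        have hz2 : V k t = 0 := by
          rcases lt_trichotomy k m with h | h | h
          · rcases eq_or_lt_of_le (show k + 1 ≤ m by omega) with he | hgt
            · apply hzero k hk.1 hk.2
              right
              rw [he]
              linarith
            · exact z2low k hk.1 hgt
          · exact absurd h hka
          · rcases eq_or_lt_of_le (show m + 1 ≤ k by omega) with he | hgt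
            · apply hzero k hk.1 hk.2
              left
              rw [← he]
              linarith
            · exact z2high k hgt hk.2
        rw [hz1 k hk.1 hk.2, hz2, hz3 k hk.1 hk.2]
        ring
    · -- transition region near θ (m+1)
      by_cases hmM' : m = M
      · -- wrap-around pairing of V m at t with V 1 at t - π
        subst hmM'
        have hVMt : V m t =
            Real.cos (Real.pi / 2 * β ((t - θ (m + 1) + Δθ) / (2 * Δθ))) :=
          hV3 m hm1 le_rfl t hc2.le (by linarith)
        have hV1t : V 1 (t - Real.pi) =
            Real.sin (Real.pi / 2 * β ((t - θ (m + 1) + Δθ) / (2 * Δθ))) := by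
          rw [hV1 1 le_rfl hm1 (t - Real.pi) (by rw [hθtop] at hc2; linarith)
              (by linarith),
            show t - Real.pi - θ 1 + Δθ = t - θ (m + 1) + Δθ by rw [hθtop]; ring]
        have hzM3 : V m (t + Real.pi) = 0 := by
          apply hzero m hm1 le_rfl
          right
          rw [hθtop]
          have := hmono2 1 (m + 1) le_rfl (by omega) le_rfl
          linarith
        refine (angular_sum_two_aux (s := Finset.Icc 1 m) (a := m) (b := 1)
          (A := Real.cos (Real.pi / 2 * β ((t - θ (m + 1) + Δθ) / (2 * Δθ))) ^ 2)
          (B := Real.sin (Real.pi / 2 * β ((t - θ (m + 1) + Δθ) / (2 * Δθ))) ^ 2)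
          (Finset.mem_Icc.mpr ⟨hm1, le_rfl⟩) (Finset.mem_Icc.mpr ⟨le_rfl, hm1⟩)
          ?_ ?_ ?_ ?_).trans (Real.cos_sq_add_sin_sq _)
        · intro hne
          rw [z1gen m (by omega) le_rfl, hVMt, hzM3]
          ring
        · intro hne
          have hz2 : V 1 t = 0 := by
            apply hzero 1 le_rfl hm1
            right
            have := hmono2 2 (m + 1) (by omega) (by omega) le_rfl
            linarith
          rw [hV1t, hz2, z3gen 1 le_rfl (by omega)]
          ring
        · intro hMe
          subst hMe
          rw [hV1t, hVMt, hzM3]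
          ring
        · intro k hk hka hkb
          rw [Finset.mem_Icc] at hk
          have hz2 : V k t = 0 := by
            rcases eq_or_lt_of_le (show k + 1 ≤ m by omega) with he | hgt
            · apply hzero k hk.1 hk.2
              right
              have := hsep m hm1 le_rfl
              rw [he]
              linarith
            · exact z2low k hk.1 hgt
          rw [z1gen k (by omega) hk.2, hz2, z3gen k hk.1 (by omega)]
          ring
      · -- m < M : interior transition, pair V m with V (m+1)
        have hmM2 : m + 1 ≤ M := by omega
        have hz1 : ∀ k, 1 ≤ k → k ≤ M → V k (t - Real.pi) = 0 := by
          apply z1top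
          have := hmono2 (m + 1) (M + 1) (by omega) (by omega) le_rfl
          linarith
        have hz3 : ∀ k, 1 ≤ k → k ≤ M → V k (t + Real.pi) = 0 := by
          apply z3bot
          have := hmono2 1 (m + 1) le_rfl (by omega) (by omega)
          linarith
        refine (angular_sum_two_aux (s := Finset.Icc 1 M) (a := m) (b := m + 1)
          (A := Real.cos (Real.pi / 2 * β ((t - θ (m + 1) + Δθ) / (2 * Δθ))) ^ 2)
          (B := Real.sin (Real.pi / 2 * β ((t - θ (m + 1) + Δθ) / (2 * Δθ))) ^ 2)
          (Finset.mem_Icc.mpr ⟨hm1, hmM⟩) (Finset.mem_Icc.mpr ⟨by omega, hmM2⟩)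
          ?_ ?_ ?_ ?_).trans (Real.cos_sq_add_sin_sq _)
        · intro _
          rw [hz1 m hm1 hmM, hz3 m hm1 hmM,
            hV3 m hm1 hmM t hc2.le (by linarith)]
          ring
        · intro _
          rw [hz1 (m + 1) (by omega) hmM2, hz3 (m + 1) (by omega) hmM2,
            hV1 (m + 1) (by omega) hmM2 t (by linarith) (by linarith)]
          ring
        · intro h; omega
        · intro k hk hka hkb
          rw [Finset.mem_Icc] at hk
          have hz2 : V k t = 0 := by
            rcases lt_trichotomy k m with h | h | h
            · rcases eq_or_lt_of_le (show k + 1 ≤ m by omega) with he | hgt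
              · apply hzero k hk.1 hk.2
                right
                have := hsep m hm1 hmM
                rw [he]
                linarith
              · exact z2low k hk.1 hgt
            · exact absurd h hka
            · rcases eq_or_lt_of_le (show m + 2 ≤ k by omega) with he | hgt
              · apply hzero k (by omega) hk.2
                left
                have := hstep (m + 1) (by omega) (by omega)
                rw [← he]
                linarith
              · exact z2high k (by omega) hk.2
          rw [hz1 k hk.1 hk.2, hz2, hz3 k hk.1 hk.2]
          ring
end

section
/- Let V₁, …, V_M : ℝ → ℝ satisfy Σ_{m=1}^{M} Vₘ(θ)² = 1 for every θ ∈ ℝ. Then for every r ≥ 0 and every θ ∈ ℝ, Φ(r)² + Σ_{n=1}^{N−1} Σ_{m=1}^{M} ( Wₙ(r)·Vₘ(θ) )² = 1; i.e., the empirical curvelet windows of type I (scales and angles detected independently) form a pointwise partition of unity in the squares over the Fourier plane in polar coordinates (r, θ). -/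
/-- The type I empirical curvelet windows (scales and angles detected
independently) form a pointwise partition of unity in the squares:
`Φ(r)² + Σₙ Σₘ (Wₙ(r)·Vₘ(θ))² = 1` for every `r ≥ 0` and every `θ`. -/
theorem empirical_curvelet_I_partition_of_unity
    (β : ℝ → ℝ)
    (hβ0 : ∀ x : ℝ, x ≤ 0 → β x = 0)
    (hβ1 : ∀ x ∈ Set.Icc (0 : ℝ) 1, β x = x ^ 4 * (35 - 84 * x + 70 * x ^ 2 - 20 * x ^ 3))
    (hβ2 : ∀ x : ℝ, 1 ≤ x → β x = 1)
    (N : ℕ) (hN : 2 ≤ N) (ω : ℕ → ℝ)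
    (hω0 : 0 < ω 1)
    (hωmono : ∀ n, 1 ≤ n → n ≤ N - 2 → ω n < ω (n + 1))
    (γ : ℝ) (hγ : γ ∈ Set.Ioo (0 : ℝ) 1)
    (hsep : ∀ n, 1 ≤ n → n ≤ N - 2 → (1 + γ) * ω n ≤ (1 - γ) * ω (n + 1))
    (Φ : ℝ → ℝ) (W : ℕ → ℝ → ℝ)
    (hΦ1 : ∀ r : ℝ, 0 ≤ r → r ≤ (1 - γ) * ω 1 → Φ r = 1)
    (hΦ2 : ∀ r : ℝ, (1 - γ) * ω 1 ≤ r → r ≤ (1 + γ) * ω 1 →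
      Φ r = Real.cos (Real.pi / 2 * β ((r - (1 - γ) * ω 1) / (2 * γ * ω 1))))
    (hΦ3 : ∀ r : ℝ, (1 + γ) * ω 1 < r → Φ r = 0)
    (hW1 : ∀ n, 1 ≤ n → n ≤ N - 2 → ∀ r : ℝ, (1 - γ) * ω n ≤ r → r ≤ (1 + γ) * ω n →
      W n r = Real.sin (Real.pi / 2 * β ((r - (1 - γ) * ω n) / (2 * γ * ω n))))
    (hW2 : ∀ n, 1 ≤ n → n ≤ N - 2 → ∀ r : ℝ, (1 + γ) * ω n ≤ r → r ≤ (1 - γ) * ω (n + 1) →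
      W n r = 1)
    (hW3 : ∀ n, 1 ≤ n → n ≤ N - 2 → ∀ r : ℝ,
      (1 - γ) * ω (n + 1) ≤ r → r ≤ (1 + γ) * ω (n + 1) →
      W n r = Real.cos (Real.pi / 2 * β ((r - (1 - γ) * ω (n + 1)) / (2 * γ * ω (n + 1)))))
    (hW4 : ∀ n, 1 ≤ n → n ≤ N - 2 → ∀ r : ℝ, 0 ≤ r →
      (r < (1 - γ) * ω n ∨ (1 + γ) * ω (n + 1) < r) → W n r = 0)
    (hWl1 : ∀ r : ℝ, (1 - γ) * ω (N - 1) ≤ r → r ≤ (1 + γ) * ω (N - 1) →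
      W (N - 1) r = Real.sin (Real.pi / 2 * β ((r - (1 - γ) * ω (N - 1)) / (2 * γ * ω (N - 1)))))
    (hWl2 : ∀ r : ℝ, (1 + γ) * ω (N - 1) ≤ r → W (N - 1) r = 1)
    (hWl3 : ∀ r : ℝ, 0 ≤ r → r < (1 - γ) * ω (N - 1) → W (N - 1) r = 0)
    (M : ℕ) (hM : 1 ≤ M) (V : ℕ → ℝ → ℝ)
    (hV : ∀ θ : ℝ, ∑ m ∈ Finset.Icc 1 M, (V m θ) ^ 2 = 1) :
    ∀ r : ℝ, 0 ≤ r → ∀ θ : ℝ,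
      Φ r ^ 2 + ∑ n ∈ Finset.Icc 1 (N - 1), ∑ m ∈ Finset.Icc 1 M,
        (W n r * V m θ) ^ 2 = 1 := by
  obtain ⟨hγ0, hγ1⟩ := hγ
  have hβz : β 0 = 0 := hβ0 0 le_rfl
  have hβo : β 1 = 1 := hβ2 1 le_rfl
  -- monotonicity of ω on [1, N-1]
  have key : ∀ l, l ≤ N - 1 → ∀ k, 1 ≤ k → k ≤ l → ω k ≤ ω l := by
    intro l
    induction l with
    | zero => intro _ k hk hkl; omega
    | succ m ih =>
      intro hl k hk hkl
      rcases eq_or_lt_of_le hkl with h | h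
      · rw [h]
      · have h1m : 1 ≤ m := by omega
        have hstep := hωmono m h1m (by omega)
        exact le_trans (ih (by omega) k hk (by omega)) hstep.le
  have ωpos : ∀ k, 1 ≤ k → k ≤ N - 1 → 0 < ω k := fun k h1 h2 =>
    lt_of_lt_of_le hω0 (key k h2 1 le_rfl h1)
  have ale : ∀ k l, 1 ≤ k → k ≤ l → l ≤ N - 1 → (1 - γ) * ω k ≤ (1 - γ) * ω l :=
    fun k l h1 h2 h3 => mul_le_mul_of_nonneg_left (key l h3 k h1 h2) (by linarith)
  have bleb : ∀ k l, 1 ≤ k → k ≤ l → l ≤ N - 1 → (1 + γ) * ω k ≤ (1 + γ) * ω l :=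
    fun k l h1 h2 h3 => mul_le_mul_of_nonneg_left (key l h3 k h1 h2) (by linarith)
  have aleb : ∀ k, 1 ≤ k → k ≤ N - 1 → (1 - γ) * ω k ≤ (1 + γ) * ω k :=
    fun k h1 h2 => mul_le_mul_of_nonneg_right (by linarith) (ωpos k h1 h2).le
  have ble : ∀ k l, 1 ≤ k → k < l → l ≤ N - 1 → (1 + γ) * ω k ≤ (1 - γ) * ω l :=
    fun k l h1 h2 h3 =>
      le_trans (hsep k h1 (by omega)) (ale (k + 1) l (by omega) (by omega) h3)
  -- vanishing below the support
  have WzeroLo : ∀ n, 1 ≤ n → n ≤ N - 1 → ∀ r : ℝ, 0 ≤ r → r ≤ (1 - γ) * ω n →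
      W n r = 0 := by
    intro n h1 h2 r hr hra
    rcases lt_or_eq_of_le hra with h | h
    · by_cases hn : n ≤ N - 2
      · exact hW4 n h1 hn r hr (Or.inl h)
      · have hn' : n = N - 1 := by omega
        subst hn'
        exact hWl3 r hr h
    · have harg : (r - (1 - γ) * ω n) / (2 * γ * ω n) = 0 := by
        rw [h, sub_self, zero_div]
      have hrb : r ≤ (1 + γ) * ω n := h.le.trans (aleb n h1 h2)
      by_cases hn : n ≤ N - 2
      · rw [hW1 n h1 hn r h.ge hrb, harg, hβz, mul_zero, Real.sin_zero]
      · have hn' : n = N - 1 := by omega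
        subst hn'
        rw [hWl1 r h.ge hrb, harg, hβz, mul_zero, Real.sin_zero]
  -- vanishing above the support
  have WzeroHi : ∀ n, 1 ≤ n → n ≤ N - 2 → ∀ r : ℝ, 0 ≤ r → (1 + γ) * ω (n + 1) ≤ r →
      W n r = 0 := by
    intro n h1 h2 r hr hrb
    rcases lt_or_eq_of_le hrb with h | h
    · exact hW4 n h1 h2 r hr (Or.inr h)
    · have hωp : 0 < ω (n + 1) := ωpos (n + 1) (by omega) (by omega)
      have harg : (r - (1 - γ) * ω (n + 1)) / (2 * γ * ω (n + 1)) = 1 := by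
        rw [← h, div_eq_one_iff_eq (by positivity)]; ring
      rw [hW3 n h1 h2 r ((aleb (n + 1) (by omega) (by omega)).trans h.le) h.ge, harg, hβo,
        mul_one, Real.cos_pi_div_two]
  have Φzero : ∀ r : ℝ, (1 + γ) * ω 1 ≤ r → Φ r = 0 := by
    intro r hrb
    rcases lt_or_eq_of_le hrb with h | h
    · exact hΦ3 r h
    · have harg : (r - (1 - γ) * ω 1) / (2 * γ * ω 1) = 1 := by
        rw [← h, div_eq_one_iff_eq (by positivity)]; ring
      rw [hΦ2 r ((aleb 1 le_rfl (by omega)).trans h.le) h.ge, harg, hβo, mul_one,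
        Real.cos_pi_div_two]
  intro r hr θ
  have hred : (∑ n ∈ Finset.Icc 1 (N - 1), ∑ m ∈ Finset.Icc 1 M, (W n r * V m θ) ^ 2)
      = ∑ n ∈ Finset.Icc 1 (N - 1), (W n r) ^ 2 := by
    refine Finset.sum_congr rfl fun n _ => ?_
    simp_rw [mul_pow, ← Finset.mul_sum, hV θ, mul_one]
  rw [hred]
  by_cases hA : r ≤ (1 - γ) * ω 1
  · have hs : ∑ n ∈ Finset.Icc 1 (N - 1), (W n r) ^ 2 = 0 :=
      Finset.sum_eq_zero fun n hn => by
        simp only [Finset.mem_Icc] at hn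
        rw [WzeroLo n hn.1 hn.2 r hr (hA.trans (ale 1 n le_rfl hn.1 hn.2))]; ring
    rw [hΦ1 r hr hA, hs]; norm_num
  by_cases hB : (1 + γ) * ω (N - 1) ≤ r
  · have hs : ∑ n ∈ Finset.Icc 1 (N - 1), (W n r) ^ 2 = (W (N - 1) r) ^ 2 :=
      Finset.sum_eq_single_of_mem (N - 1) (Finset.mem_Icc.mpr ⟨by omega, le_rfl⟩)
        fun k hk hkne => by
          simp only [Finset.mem_Icc] at hk
          rw [WzeroHi k hk.1 (by omega) r hr
            ((bleb (k + 1) (N - 1) (by omega) (by omega) le_rfl).trans hB)]; ring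
    rw [Φzero r ((bleb 1 (N - 1) le_rfl (by omega) le_rfl).trans hB), hs, hWl2 r hB]
    norm_num
  push_neg at hA hB
  classical
  have hex : ∃ k, 1 ≤ k ∧ k ≤ N - 1 ∧ r ≤ (1 + γ) * ω k := ⟨N - 1, by omega, le_rfl, hB.le⟩
  obtain ⟨hn1, hnN, hrbn⟩ := Nat.find_spec hex
  set n := Nat.find hex with hn_def
  have hmin : ∀ k, 1 ≤ k → k < n → (1 + γ) * ω k < r := by
    intro k h1 h2
    by_contra hc
    push_neg at hc
    exact Nat.find_min hex h2 ⟨h1, by omega, hc⟩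
  by_cases hC : r < (1 - γ) * ω n
  · -- flat region of W (n-1)
    have hn2 : 2 ≤ n := by
      by_contra hc
      have hone : n = 1 := by omega
      rw [hone] at hC; linarith
    have hm1 : 1 ≤ n - 1 := by omega
    have hmN : n - 1 ≤ N - 2 := by omega
    have hbm : (1 + γ) * ω (n - 1) < r := hmin (n - 1) hm1 (by omega)
    have hWm : W (n - 1) r = 1 := by
      have hsucc : n - 1 + 1 = n := by omega
      refine hW2 (n - 1) hm1 hmN r hbm.le ?_
      rw [hsucc]; exact hC.le
    have hs : ∑ k ∈ Finset.Icc 1 (N - 1), (W k r) ^ 2 = (W (n - 1) r) ^ 2 :=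
      Finset.sum_eq_single_of_mem (n - 1) (Finset.mem_Icc.mpr ⟨hm1, by omega⟩)
        fun k hk hkne => by
          simp only [Finset.mem_Icc] at hk
          rcases lt_or_ge k (n - 1) with h | h
          · rw [WzeroHi k hk.1 (by omega) r hr
              (le_of_lt (lt_of_le_of_lt (bleb (k + 1) (n - 1) (by omega) (by omega) (by omega))
                hbm))]; ring
          · have hkn : n ≤ k := by omega
            rw [WzeroLo k hk.1 hk.2 r hr (hC.le.trans (ale n k hn1 hkn hk.2))]; ring
    rw [Φzero r (le_of_lt (lt_of_le_of_lt (bleb 1 (n - 1) le_rfl hm1 (by omega)) hbm)), hs, hWm]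
    norm_num
  push_neg at hC
  have hsin : W n r = Real.sin (Real.pi / 2 * β ((r - (1 - γ) * ω n) / (2 * γ * ω n))) := by
    by_cases hn2 : n ≤ N - 2
    · exact hW1 n hn1 hn2 r hC hrbn
    · have hne : n = N - 1 := by omega
      rw [hne] at hC hrbn ⊢
      exact hWl1 r hC hrbn
  by_cases hone : n = 1
  · rw [hone] at hC hrbn hsin
    have hcos : Φ r = Real.cos (Real.pi / 2 * β ((r - (1 - γ) * ω 1) / (2 * γ * ω 1))) :=
      hΦ2 r hC hrbn
    have hs : ∑ k ∈ Finset.Icc 1 (N - 1), (W k r) ^ 2 = (W 1 r) ^ 2 :=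
      Finset.sum_eq_single_of_mem 1 (Finset.mem_Icc.mpr ⟨le_rfl, by omega⟩)
        fun k hk hkne => by
          simp only [Finset.mem_Icc] at hk
          rw [WzeroLo k hk.1 hk.2 r hr (hrbn.trans (ble 1 k le_rfl (by omega) hk.2))]; ring
    rw [hs, hcos, hsin]
    exact Real.cos_sq_add_sin_sq _
  · have hn2 : 2 ≤ n := by omega
    have hm1 : 1 ≤ n - 1 := by omega
    have hmN : n - 1 ≤ N - 2 := by omega
    have hsucc : n - 1 + 1 = n := by omega
    have hcos : W (n - 1) r = Real.cos (Real.pi / 2 * β ((r - (1 - γ) * ω n) / (2 * γ * ω n))) := by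
      have h := hW3 (n - 1) hm1 hmN r (by rw [hsucc]; exact hC) (by rw [hsucc]; exact hrbn)
      rw [hsucc] at h; exact h
    have hΦ0 : Φ r = 0 := Φzero r ((ble 1 n le_rfl (by omega) hnN).trans hC)
    have hsub : ({n - 1, n} : Finset ℕ) ⊆ Finset.Icc 1 (N - 1) := by
      intro k hk
      simp only [Finset.mem_insert, Finset.mem_singleton] at hk
      simp only [Finset.mem_Icc]
      rcases hk with h | h <;> omega
    have hs : ∑ k ∈ Finset.Icc 1 (N - 1), (W k r) ^ 2
        = ∑ k ∈ ({n - 1, n} : Finset ℕ), (W k r) ^ 2 := by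
      refine (Finset.sum_subset hsub fun k hk hknot => ?_).symm
      simp only [Finset.mem_Icc] at hk
      simp only [Finset.mem_insert, Finset.mem_singleton, not_or] at hknot
      rcases lt_or_ge k n with h | h
      · have hklt : k + 1 < n := by omega
        rw [WzeroHi k hk.1 (by omega) r hr ((ble (k + 1) n (by omega) hklt hnN).trans hC)]; ring
      · have hgt : n < k := by omega
        rw [WzeroLo k hk.1 hk.2 r hr (hrbn.trans (ble n k hn1 hgt hk.2))]; ring
    rw [hΦ0, hs, Finset.sum_pair (by omega : n - 1 ≠ n), hcos, hsin,
      Real.cos_sq_add_sin_sq]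
    norm_num
end

section
/- For each 1 ≤ n ≤ N−1, let V₁ⁿ, …, V_{Mₙ}ⁿ : ℝ → ℝ satisfy Σ_{m=1}^{Mₙ} Vₘⁿ(θ)² = 1 for every θ ∈ ℝ (scale-dependent angular windows). Then for every r ≥ 0 and every θ ∈ ℝ, Φ(r)² + Σ_{n=1}^{N−1} Σ_{m=1}^{Mₙ} ( Wₙ(r)·Vₘⁿ(θ) )² = 1; i.e., the empirical curvelet windows of type II (angles detected separately at each detected scale) form a pointwise partition of unity in the squares over the Fourier plane in polar coordinates (r, θ). -/
/-- The type II empirical curvelet windows (scale-dependent angular windows)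
form a pointwise partition of unity in the squares:
`Φ(r)² + Σₙ Σ_{m=1}^{Mₙ} (Wₙ(r)·Vₘⁿ(θ))² = 1` for every `r ≥ 0` and every `θ`. -/
theorem empirical_curvelet_II_partition_of_unity
    (β : ℝ → ℝ)
    (hβ0 : ∀ x : ℝ, x ≤ 0 → β x = 0)
    (hβ1 : ∀ x ∈ Set.Icc (0 : ℝ) 1, β x = x ^ 4 * (35 - 84 * x + 70 * x ^ 2 - 20 * x ^ 3))
    (hβ2 : ∀ x : ℝ, 1 ≤ x → β x = 1)
    (N : ℕ) (hN : 2 ≤ N) (ω : ℕ → ℝ)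
    (hω0 : 0 < ω 1)
    (hωmono : ∀ n, 1 ≤ n → n ≤ N - 2 → ω n < ω (n + 1))
    (γ : ℝ) (hγ : γ ∈ Set.Ioo (0 : ℝ) 1)
    (hsep : ∀ n, 1 ≤ n → n ≤ N - 2 → (1 + γ) * ω n ≤ (1 - γ) * ω (n + 1))
    (Φ : ℝ → ℝ) (W : ℕ → ℝ → ℝ)
    (hΦ1 : ∀ r : ℝ, 0 ≤ r → r ≤ (1 - γ) * ω 1 → Φ r = 1)
    (hΦ2 : ∀ r : ℝ, (1 - γ) * ω 1 ≤ r → r ≤ (1 + γ) * ω 1 →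
      Φ r = Real.cos (Real.pi / 2 * β ((r - (1 - γ) * ω 1) / (2 * γ * ω 1))))
    (hΦ3 : ∀ r : ℝ, (1 + γ) * ω 1 < r → Φ r = 0)
    (hW1 : ∀ n, 1 ≤ n → n ≤ N - 2 → ∀ r : ℝ, (1 - γ) * ω n ≤ r → r ≤ (1 + γ) * ω n →
      W n r = Real.sin (Real.pi / 2 * β ((r - (1 - γ) * ω n) / (2 * γ * ω n))))
    (hW2 : ∀ n, 1 ≤ n → n ≤ N - 2 → ∀ r : ℝ, (1 + γ) * ω n ≤ r → r ≤ (1 - γ) * ω (n + 1) →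
      W n r = 1)
    (hW3 : ∀ n, 1 ≤ n → n ≤ N - 2 → ∀ r : ℝ,
      (1 - γ) * ω (n + 1) ≤ r → r ≤ (1 + γ) * ω (n + 1) →
      W n r = Real.cos (Real.pi / 2 * β ((r - (1 - γ) * ω (n + 1)) / (2 * γ * ω (n + 1)))))
    (hW4 : ∀ n, 1 ≤ n → n ≤ N - 2 → ∀ r : ℝ, 0 ≤ r →
      (r < (1 - γ) * ω n ∨ (1 + γ) * ω (n + 1) < r) → W n r = 0)
    (hWl1 : ∀ r : ℝ, (1 - γ) * ω (N - 1) ≤ r → r ≤ (1 + γ) * ω (N - 1) →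
      W (N - 1) r = Real.sin (Real.pi / 2 * β ((r - (1 - γ) * ω (N - 1)) / (2 * γ * ω (N - 1)))))
    (hWl2 : ∀ r : ℝ, (1 + γ) * ω (N - 1) ≤ r → W (N - 1) r = 1)
    (hWl3 : ∀ r : ℝ, 0 ≤ r → r < (1 - γ) * ω (N - 1) → W (N - 1) r = 0)
    (M : ℕ → ℕ) (hM : ∀ n, 1 ≤ n → n ≤ N - 1 → 1 ≤ M n)
    (V : ℕ → ℕ → ℝ → ℝ)
    (hV : ∀ n, 1 ≤ n → n ≤ N - 1 →
      ∀ θ : ℝ, ∑ m ∈ Finset.Icc 1 (M n), (V n m θ) ^ 2 = 1) :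
    ∀ r : ℝ, 0 ≤ r → ∀ θ : ℝ,
      Φ r ^ 2 + ∑ n ∈ Finset.Icc 1 (N - 1), ∑ m ∈ Finset.Icc 1 (M n),
        (W n r * V n m θ) ^ 2 = 1 := by
  obtain ⟨K, rfl⟩ : ∃ K, N = K + 2 := ⟨N - 2, by omega⟩
  obtain ⟨hγ0, hγ1⟩ := hγ
  have e1 : K + 2 - 1 = K + 1 := by omega
  have e2 : K + 2 - 2 = K := by omega
  rw [e1] at hWl1 hWl2 hWl3
  -- positivity of the ω's
  have hωpos : ∀ n, 1 ≤ n → n ≤ K + 1 → 0 < ω n := by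
    intro n h1 h2
    induction n with
    | zero => omega
    | succ m ih =>
      rcases Nat.lt_or_ge 1 (m + 1) with h | h
      · have hm1 : 1 ≤ m := by omega
        have h3 := hωmono m hm1 (by omega)
        have h4 := ih hm1 (by omega)
        linarith
      · have : m + 1 = 1 := by omega
        rw [this]; exact hω0
  -- auxiliary lowpass family
  set L : ℕ → ℝ → ℝ := fun n r =>
    if r ≤ (1 - γ) * ω n then 1
    else if r ≤ (1 + γ) * ω n then
      Real.cos (Real.pi / 2 * β ((r - (1 - γ) * ω n) / (2 * γ * ω n)))
    else 0 with hL
  have L_one : ∀ n, ∀ r : ℝ, r ≤ (1 - γ) * ω n → L n r = 1 := by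
    intro n r h; simp [hL, h]
  have L_cos : ∀ n, ∀ r : ℝ, (1 - γ) * ω n ≤ r → r ≤ (1 + γ) * ω n →
      L n r = Real.cos (Real.pi / 2 * β ((r - (1 - γ) * ω n) / (2 * γ * ω n))) := by
    intro n r h1 h2
    by_cases h : r ≤ (1 - γ) * ω n
    · have hre : r = (1 - γ) * ω n := le_antisymm h h1
      rw [hre]
      simp [hL, sub_self, zero_div, hβ0 0 le_rfl]
    · simp [hL, h, h2]
  have L_zero : ∀ n, 0 < ω n → ∀ r : ℝ, (1 + γ) * ω n < r → L n r = 0 := by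
    intro n hp r h
    have h1 : ¬ r ≤ (1 - γ) * ω n := by nlinarith
    have h2 : ¬ r ≤ (1 + γ) * ω n := not_le.mpr h
    simp [hL, h1, h2]
  -- the key telescoping identity for middle windows
  have key : ∀ n, 1 ≤ n → n ≤ K → ∀ r : ℝ, 0 ≤ r →
      W n r ^ 2 = L (n + 1) r ^ 2 - L n r ^ 2 := by
    intro n h1 h2 r hr
    have hpn : 0 < ω n := hωpos n h1 (by omega)
    have hpn1 : 0 < ω (n + 1) := hωpos (n + 1) (by omega) (by omega)
    have hsepn : (1 + γ) * ω n ≤ (1 - γ) * ω (n + 1) := hsep n h1 (by omega)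
    have hlt : (1 - γ) * ω n ≤ (1 + γ) * ω n := by nlinarith
    have hlt1 : (1 - γ) * ω (n + 1) ≤ (1 + γ) * ω (n + 1) := by nlinarith
    rcases lt_or_ge r ((1 - γ) * ω n) with hc | hc
    · rw [hW4 n h1 (by omega) r hr (Or.inl hc),
        L_one n r hc.le, L_one (n + 1) r (hc.le.trans (hlt.trans hsepn))]
      ring
    rcases le_or_gt r ((1 + γ) * ω n) with hd | hd
    · rw [hW1 n h1 (by omega) r hc hd, L_cos n r hc hd,
        L_one (n + 1) r (hd.trans hsepn), Real.sin_sq]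
      ring
    rcases le_or_gt r ((1 - γ) * ω (n + 1)) with he | he
    · rw [hW2 n h1 (by omega) r hd.le he, L_zero n hpn r hd, L_one (n + 1) r he]
      ring
    rcases le_or_gt r ((1 + γ) * ω (n + 1)) with hf | hf
    · rw [hW3 n h1 (by omega) r he.le hf, L_cos (n + 1) r he.le hf,
        L_zero n hpn r hd]
      ring
    · rw [hW4 n h1 (by omega) r hr (Or.inr hf), L_zero n hpn r hd,
        L_zero (n + 1) hpn1 r hf]
      ring
  -- the lowpass window
  have keyΦ : ∀ r : ℝ, 0 ≤ r → Φ r ^ 2 = L 1 r ^ 2 := by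
    intro r hr
    rcases le_or_gt r ((1 - γ) * ω 1) with hc | hc
    · rw [hΦ1 r hr hc, L_one 1 r hc]
    rcases le_or_gt r ((1 + γ) * ω 1) with hd | hd
    · rw [hΦ2 r hc.le hd, L_cos 1 r hc.le hd]
    · rw [hΦ3 r hd, L_zero 1 hω0 r hd]
  -- the last window
  have keyLast : ∀ r : ℝ, 0 ≤ r → W (K + 1) r ^ 2 = 1 - L (K + 1) r ^ 2 := by
    intro r hr
    have hp : 0 < ω (K + 1) := hωpos (K + 1) (by omega) le_rfl
    rcases lt_or_ge r ((1 - γ) * ω (K + 1)) with hc | hc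
    · rw [hWl3 r hr hc, L_one (K + 1) r hc.le]; ring
    rcases le_or_gt r ((1 + γ) * ω (K + 1)) with hd | hd
    · rw [hWl1 r hc hd, L_cos (K + 1) r hc hd, Real.sin_sq]
    · rw [hWl2 r hd.le, L_zero (K + 1) hp r hd]; ring
  -- telescoping sum
  have tel : ∀ k, k ≤ K → ∀ r : ℝ, 0 ≤ r →
      ∑ n ∈ Finset.Icc 1 k, W n r ^ 2 = L (k + 1) r ^ 2 - L 1 r ^ 2 := by
    intro k
    induction k with
    | zero => intro _ r hr; simp
    | succ m ih =>
      intro hk r hr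
      rw [Finset.sum_Icc_succ_top (by omega : 1 ≤ m + 1), ih (by omega) r hr,
        key (m + 1) (by omega) (by omega) r hr]
      ring
  intro r hr θ
  have inner : ∀ n ∈ Finset.Icc 1 (K + 1),
      ∑ m ∈ Finset.Icc 1 (M n), (W n r * V n m θ) ^ 2 = W n r ^ 2 := by
    intro n hn
    rw [Finset.mem_Icc] at hn
    have : ∑ m ∈ Finset.Icc 1 (M n), (W n r * V n m θ) ^ 2
        = W n r ^ 2 * ∑ m ∈ Finset.Icc 1 (M n), V n m θ ^ 2 := by
      rw [Finset.mul_sum]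
      exact Finset.sum_congr rfl (fun m _ => by ring)
    rw [this, hV n hn.1 (by omega) θ, mul_one]
  rw [e1, Finset.sum_congr rfl inner,
    Finset.sum_Icc_succ_top (by omega : 1 ≤ K + 1), tel K le_rfl r hr,
    keyΦ r hr, keyLast r hr]
  ring
end
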